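/- arXiv:2309.16864 — 4 statements merged into one kernel-verified Lean document; each statement's English description precedes it below -/
import Mathlib

section
/- Let $A_1, \ldots, A_\ell$ be nonempty compact convex sets in $\mathbb{R}^n$. Then $\sum_{i=1}^\ell \operatorname{diam} A_i \le \sqrt{\pi}\, n \cdot \operatorname{diam}\left(\sum_{i=1}^\ell A_i\right)$, where the sum of sets is the Minkowski sum. -/
/-!
Project onto the coordinate axes. Since `‖·‖₂ ≤ ‖·‖₁`, the diameter of a bounded set is at most
the sum of the diameters of its coordinate projections. On the real line the diameter of a
Minkowski sum of nonempty bounded sets is the sum of the diameters (`sup` and `inf` are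
additive), and projection commutes with Minkowski sums and does not increase diameters. Summing
over the `n` coordinates gives `∑ diam Aᵢ ≤ n · diam (∑ Aᵢ)`, and `1 ≤ √π`.
-/

open scoped Pointwise
open Bornology Metric

theorem Set.Nonempty.finsetSum {ι M : Type*} [AddCommMonoid M] (u : Finset ι) {s : ι → Set M}
    (hs : ∀ i ∈ u, (s i).Nonempty) : (∑ i ∈ u, s i).Nonempty :=
  Finset.sum_induction s Set.Nonempty (fun _ _ => Set.Nonempty.add) Set.zero_nonempty hs

theorem Bornology.IsBounded.finsetSum {ι E : Type*} [SeminormedAddCommGroup E] (u : Finset ι)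
    {s : ι → Set E} (hs : ∀ i ∈ u, IsBounded (s i)) : IsBounded (∑ i ∈ u, s i) :=
  Finset.sum_induction s IsBounded (fun _ _ => IsBounded.add) isBounded_singleton hs

theorem ConvexBody.coe_finsetSum {ι V : Type*} [TopologicalSpace V] [AddCommGroup V] [Module ℝ V]
    [ContinuousAdd V] (u : Finset ι) (K : ι → ConvexBody V) :
    ((∑ i ∈ u, K i : ConvexBody V) : Set V) = ∑ i ∈ u, (K i : Set V) :=
  map_sum (⟨⟨(↑), ConvexBody.coe_zero⟩, ConvexBody.coe_add⟩ : ConvexBody V →+ Set V) K u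

namespace Real

theorem diam_add {s t : Set ℝ} (hs : s.Nonempty) (hs' : IsBounded s) (ht : t.Nonempty)
    (ht' : IsBounded t) : diam (s + t) = diam s + diam t := by
  rw [Real.diam_eq hs', Real.diam_eq ht', Real.diam_eq (hs'.add ht'),
    csSup_add hs hs'.bddAbove ht ht'.bddAbove, csInf_add hs hs'.bddBelow ht ht'.bddBelow]
  ring

theorem diam_finsetSum {ι : Type*} (u : Finset ι) {s : ι → Set ℝ} (hs : ∀ i, (s i).Nonempty)
    (hs' : ∀ i, IsBounded (s i)) : diam (∑ i ∈ u, s i) = ∑ i ∈ u, diam (s i) := by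
  classical
  induction u using Finset.induction_on with
  | empty => simp
  | insert a u ha ih =>
    rw [Finset.sum_insert ha, Finset.sum_insert ha, ← ih,
      diam_add (hs a) (hs' a) (.finsetSum u fun i _ => hs i) (.finsetSum u fun i _ => hs' i)]

end Real

namespace EuclideanSpace

variable {ι : Type*} [Fintype ι]

theorem dist_le_sum_dist_apply (x y : EuclideanSpace ℝ ι) : dist x y ≤ ∑ i, dist (x i) (y i) := by
  have hsum : 0 ≤ ∑ i, dist (x i) (y i) := Finset.sum_nonneg fun i _ => dist_nonneg
  rw [EuclideanSpace.dist_eq, Real.sqrt_le_left hsum]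
  exact Finset.sum_sq_le_sq_sum_of_nonneg fun i _ => dist_nonneg

theorem lipschitzWith_proj (i : ι) : LipschitzWith 1 (proj i : EuclideanSpace ℝ ι → ℝ) :=
  LipschitzWith.mk_one fun x y => PiLp.dist_apply_le x y i

theorem diam_le_sum_diam_image_proj {s : Set (EuclideanSpace ℝ ι)} (hs : IsBounded s) :
    diam s ≤ ∑ i, diam (proj i '' s) := by
  refine diam_le_of_forall_dist_le (Finset.sum_nonneg fun i _ => diam_nonneg) fun x hx y hy => ?_
  refine (dist_le_sum_dist_apply x y).trans (Finset.sum_le_sum fun i _ => ?_)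
  exact dist_le_diam_of_mem ((lipschitzWith_proj i).isBounded_image hs)
    (Set.mem_image_of_mem _ hx) (Set.mem_image_of_mem _ hy)

theorem diam_image_proj_le {s : Set (EuclideanSpace ℝ ι)} (hs : IsBounded s) (i : ι) :
    diam (proj i '' s) ≤ diam s := by
  simpa using (lipschitzWith_proj i).diam_image_le s hs

theorem sum_diam_le_card_mul_diam_finsetSum {κ : Type*} (u : Finset κ)
    {A : κ → Set (EuclideanSpace ℝ ι)} (hA : ∀ k, (A k).Nonempty) (hA' : ∀ k, IsBounded (A k)) :
    ∑ k ∈ u, diam (A k) ≤ Fintype.card ι * diam (∑ k ∈ u, A k) := by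
  have hsum : IsBounded (∑ k ∈ u, A k) := .finsetSum u fun k _ => hA' k
  calc ∑ k ∈ u, diam (A k)
      ≤ ∑ k ∈ u, ∑ i, diam (proj i '' A k) :=
        Finset.sum_le_sum fun k _ => diam_le_sum_diam_image_proj (hA' k)
    _ = ∑ i, diam (∑ k ∈ u, proj i '' A k) := by
        rw [Finset.sum_comm]
        refine Finset.sum_congr rfl fun i _ => (Real.diam_finsetSum u (fun k => (hA k).image _)
          fun k => (lipschitzWith_proj i).isBounded_image (hA' k)).symm
    _ = ∑ i, diam (proj i '' ∑ k ∈ u, A k) := by simp_rw [Set.image_finsetSum]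
    _ ≤ ∑ _i : ι, diam (∑ k ∈ u, A k) :=
        Finset.sum_le_sum fun i _ => diam_image_proj_le hsum i
    _ = Fintype.card ι * diam (∑ k ∈ u, A k) := by simp

end EuclideanSpace

theorem diam_sum_le {n ℓ : ℕ} (A : Fin ℓ → ConvexBody (EuclideanSpace ℝ (Fin n))) :
    ∑ i, Metric.diam (A i : Set (EuclideanSpace ℝ (Fin n))) ≤
      Real.sqrt Real.pi * n *
        Metric.diam ((∑ i, A i : ConvexBody (EuclideanSpace ℝ (Fin n))) :
          Set (EuclideanSpace ℝ (Fin n))) := by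
  have h := EuclideanSpace.sum_diam_le_card_mul_diam_finsetSum Finset.univ
    (fun i => (A i).nonempty) fun i => (A i).isCompact.isBounded
  rw [Fintype.card_fin, ← ConvexBody.coe_finsetSum] at h
  have hpi : 1 ≤ Real.sqrt Real.pi := Real.one_le_sqrt.mpr (by linarith [Real.two_le_pi])
  refine h.trans (le_mul_of_one_le_left (by positivity) hpi |>.trans_eq ?_)
  ring
end

section
/- Let $\mathcal{K}_*$ be a nonempty Borel subset of the space $\mathcal{K}^n$ of convex bodies, let $\mu$ be a Borel probability measure on $\mathcal{K}_*$ with bounded support, and let $K \in \mathcal{K}^n$ be the convex body with $h_K = \int h_P \, \mu(dP)$. Then $K$ is the limit, in the Hausdorff metric, of a sequence of finite nonnegative Minkowski combinations of bodies from the support of $\mu$. -/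
open scoped Pointwise RealInnerProductSpace NNReal
open MeasureTheory Filter Topology

noncomputable section

/-- Support function of a convex body. -/
def sfn {n : ℕ} (K : ConvexBody (EuclideanSpace ℝ (Fin n))) (u : EuclideanSpace ℝ (Fin n)) : ℝ :=
  sSup ((fun x => ⟪x, u⟫) '' (K : Set (EuclideanSpace ℝ (Fin n))))

/-- The support of a measure on a topological space: points all of whose open
neighbourhoods have positive measure. -/
def msupport {X : Type*} [TopologicalSpace X] [MeasurableSpace X] (μ : Measure X) : Set X :=
  {x | ∀ U : Set X, IsOpen U → x ∈ U → μ U ≠ 0}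

/-!
The support function `P ↦ sfn P u` is `‖u‖`-Lipschitz for the Hausdorff metric, and conversely,
by Hahn–Banach, `|sfn K - sfn L| ≤ ε ‖·‖` forces `dist K L ≤ ε`. The simple functions
`φ k = SimpleFunc.approxOn id _ (𝒦 ∩ msupport μ) _ _ k` take values in `𝒦 ∩ msupport μ` and
converge to the identity on it. The Minkowski combination `Q k = ∑ L, μ (φ k = L) • L` has support
function `∫ sfn (φ k P) · ∂μ`, hence `dist (Q k) K ≤ ∫ dist (φ k P) P ∂μ`, and this tends to `0` by
dominated convergence because `𝒦 ∩ msupport μ` has full measure and is bounded.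
-/
section SupportFunction

variable {n : ℕ}

local notation "E" => EuclideanSpace ℝ (Fin n)

lemma le_sfn {K : ConvexBody E} {x : E} (hx : x ∈ K) (u : E) : ⟪x, u⟫ ≤ sfn K u :=
  le_csSup ((K.isCompact.image (continuous_id.inner continuous_const)).bddAbove) ⟨x, hx, rfl⟩

lemma sfn_le {K : ConvexBody E} {u : E} {c : ℝ} (h : ∀ x ∈ K, ⟪x, u⟫ ≤ c) : sfn K u ≤ c :=
  csSup_le (K.nonempty.image _) (by rintro r ⟨x, hx, rfl⟩; exact h x hx)

lemma exists_mem_sfn_eq (K : ConvexBody E) (u : E) : ∃ x ∈ K, sfn K u = ⟪x, u⟫ := by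
  obtain ⟨x, hx, hxu⟩ := (K.isCompact.image (continuous_id.inner continuous_const :
    Continuous fun x : E => ⟪x, u⟫)).sSup_mem (K.nonempty.image _)
  exact ⟨x, hx, hxu.symm⟩

@[simp]
lemma sfn_zero (u : E) : sfn 0 u = 0 := by
  simp [sfn, ConvexBody.coe_zero]

lemma sfn_add (K L : ConvexBody E) (u : E) : sfn (K + L) u = sfn K u + sfn L u := by
  apply le_antisymm
  · refine sfn_le fun x hx => ?_
    obtain ⟨y, hy, z, hz, rfl⟩ := Set.mem_add.mp ((ConvexBody.coe_add K L).le hx)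
    rw [inner_add_left]
    exact add_le_add (le_sfn hy u) (le_sfn hz u)
  · obtain ⟨y, hy, hyu⟩ := exists_mem_sfn_eq K u
    obtain ⟨z, hz, hzu⟩ := exists_mem_sfn_eq L u
    rw [hyu, hzu, ← inner_add_left]
    exact le_sfn ((ConvexBody.coe_add K L).ge (Set.add_mem_add hy hz)) u

lemma sfn_smul (c : ℝ≥0) (K : ConvexBody E) (u : E) : sfn (c • K) u = c * sfn K u := by
  apply le_antisymm
  · refine sfn_le fun x hx => ?_
    obtain ⟨y, hy, rfl⟩ := Set.mem_smul_set.mp ((ConvexBody.coe_smul' c K).le hx)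
    rw [NNReal.smul_def, real_inner_smul_left]
    exact mul_le_mul_of_nonneg_left (le_sfn hy u) c.coe_nonneg
  · obtain ⟨y, hy, hyu⟩ := exists_mem_sfn_eq K u
    rw [hyu, ← real_inner_smul_left, ← NNReal.smul_def]
    exact le_sfn ((ConvexBody.coe_smul' c K).ge (Set.smul_mem_smul_set hy)) u

lemma sfn_sum_smul {ι : Type*} (s : Finset ι) (c : ι → ℝ≥0) (L : ι → ConvexBody E) (u : E) :
    sfn (∑ i ∈ s, c i • L i) u = ∑ i ∈ s, c i * sfn (L i) u := by
  classical
  induction s using Finset.induction_on with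
  | empty => simp
  | insert a s ha ih => rw [Finset.sum_insert ha, Finset.sum_insert ha, sfn_add, sfn_smul, ih]

lemma sfn_le_sfn_add_dist_mul (K L : ConvexBody E) (u : E) :
    sfn K u ≤ sfn L u + dist K L * ‖u‖ := by
  obtain ⟨x, hx, hxu⟩ := exists_mem_sfn_eq K u
  obtain ⟨y, hy, hxy⟩ := L.isCompact.exists_infDist_eq_dist L.nonempty x
  have hxy_le : ‖x - y‖ ≤ dist K L := by
    rw [← dist_eq_norm, ← hxy, ← ConvexBody.hausdorffDist_coe]
    exact Metric.infDist_le_hausdorffDist_of_mem hx ConvexBody.hausdorffEDist_ne_top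
  calc sfn K u = ⟪y, u⟫ + ⟪x - y, u⟫ := by rw [hxu, inner_sub_left]; ring
    _ ≤ sfn L u + ‖x - y‖ * ‖u‖ := add_le_add (le_sfn hy u) (real_inner_le_norm _ _)
    _ ≤ sfn L u + dist K L * ‖u‖ := by gcongr

lemma lipschitzWith_sfn (u : E) : LipschitzWith ‖u‖₊ fun K : ConvexBody E => sfn K u := by
  refine LipschitzWith.of_dist_le_mul fun K L => ?_
  rw [Real.dist_eq, abs_sub_le_iff, coe_nnnorm, mul_comm]
  constructor
  · linarith [sfn_le_sfn_add_dist_mul K L u]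
  · linarith [dist_comm L K ▸ sfn_le_sfn_add_dist_mul L K u]

lemma mem_of_forall_inner_le_sfn {K : ConvexBody E} {x : E} (h : ∀ u, ⟪x, u⟫ ≤ sfn K u) :
    x ∈ K := by
  by_contra hx
  obtain ⟨f, s, hfK, hsx⟩ := geometric_hahn_banach_closed_point K.convex K.isClosed hx
  set v := (InnerProductSpace.toDual ℝ E).symm f
  have hf : ∀ z, f z = ⟪z, v⟫ := fun z => by
    rw [real_inner_comm]; exact InnerProductSpace.toDual_symm_apply.symm
  obtain ⟨y, hy, hyv⟩ := exists_mem_sfn_eq K v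
  linarith [hf x, hf y, h v, hfK y hy]

def ConvexBody.closedBallZero (ε : ℝ) (hε : 0 ≤ ε) : ConvexBody E :=
  ⟨Metric.closedBall 0 ε, convex_closedBall 0 ε, isCompact_closedBall 0 ε,
    Metric.nonempty_closedBall.mpr hε⟩

lemma sfn_closedBallZero {ε : ℝ} (hε : 0 ≤ ε) (u : E) :
    sfn (ConvexBody.closedBallZero ε hε) u = ε * ‖u‖ := by
  apply le_antisymm
  · refine sfn_le fun x hx => ?_
    calc ⟪x, u⟫ ≤ ‖x‖ * ‖u‖ := real_inner_le_norm x u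
      _ ≤ ε * ‖u‖ := by gcongr; exact mem_closedBall_zero_iff.mp hx
  · rcases eq_or_ne u 0 with rfl | hu
    · simpa using le_sfn (ConvexBody.closedBallZero ε hε).nonempty.some_mem 0
    · have hw : (ε / ‖u‖) • u ∈ ConvexBody.closedBallZero ε hε := by
        change _ ∈ Metric.closedBall (0 : E) ε
        rw [mem_closedBall_zero_iff, norm_smul, Real.norm_of_nonneg (by positivity),
          div_mul_cancel₀ _ (norm_ne_zero_iff.mpr hu)]
      calc ε * ‖u‖ = ⟪(ε / ‖u‖) • u, u⟫ := by
            rw [real_inner_smul_left, real_inner_self_eq_norm_mul_norm]; field_simp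
        _ ≤ _ := le_sfn hw u

lemma exists_mem_dist_le_of_sfn_le {K L : ConvexBody E} {ε : ℝ} (hε : 0 ≤ ε)
    (h : ∀ u, sfn K u ≤ sfn L u + ε * ‖u‖) {x : E} (hx : x ∈ K) : ∃ y ∈ L, dist x y ≤ ε := by
  have hx' : x ∈ L + ConvexBody.closedBallZero ε hε := mem_of_forall_inner_le_sfn fun u => by
    rw [sfn_add, sfn_closedBallZero]; exact (le_sfn hx u).trans (h u)
  obtain ⟨y, hy, w, hw, rfl⟩ := Set.mem_add.mp ((ConvexBody.coe_add _ _).le hx')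
  refine ⟨y, hy, ?_⟩
  simpa [dist_eq_norm] using mem_closedBall_zero_iff.mp hw

lemma dist_le_of_abs_sfn_sub_le {K L : ConvexBody E} {ε : ℝ} (hε : 0 ≤ ε)
    (h : ∀ u, |sfn K u - sfn L u| ≤ ε * ‖u‖) : dist K L ≤ ε := by
  rw [← ConvexBody.hausdorffDist_coe]
  refine Metric.hausdorffDist_le_of_mem_dist hε
    (fun _ => exists_mem_dist_le_of_sfn_le hε fun u => ?_)
    (fun _ => exists_mem_dist_le_of_sfn_le hε fun u => ?_) <;>
    linarith [abs_le.mp (h u)]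

end SupportFunction

lemma msupport_eq_support {X : Type*} [TopologicalSpace X] [MeasurableSpace X] (μ : Measure X) :
    msupport μ = μ.support := by
  ext x
  simp only [msupport, Measure.support_eq_forall_isOpen, Set.mem_ofPred_eq, pos_iff_ne_zero]
  exact forall_congr' fun U => forall_comm

section Approximation

open SimpleFunc

variable {X α : Type*} [MeasurableSpace X] {μ : Measure X}
  [PseudoMetricSpace α] [MeasurableSpace α] [OpensMeasurableSpace α]
  {f : X → α} {s : Set α} {y₀ : α} [TopologicalSpace.SeparableSpace s]

lemma ae_norm_dist_approxOn_le_diam (hf : Measurable f) (h₀ : y₀ ∈ s)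
    (hs : Bornology.IsBounded s) (hfs : ∀ᵐ x ∂μ, f x ∈ s) (k : ℕ) :
    ∀ᵐ x ∂μ, ‖dist (approxOn f hf s y₀ h₀ k x) (f x)‖ ≤ Metric.diam s :=
  hfs.mono fun _ hx => by
    rw [Real.norm_of_nonneg dist_nonneg]
    exact Metric.dist_le_diam_of_mem hs (approxOn_mem hf h₀ k _) hx

lemma integrable_dist_approxOn [SecondCountableTopology α] [IsFiniteMeasure μ]
    (hf : Measurable f) (h₀ : y₀ ∈ s) (hs : Bornology.IsBounded s) (hfs : ∀ᵐ x ∂μ, f x ∈ s)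
    (k : ℕ) : Integrable (fun x => dist (approxOn f hf s y₀ h₀ k x) (f x)) μ :=
  .of_bound ((SimpleFunc.measurable _).dist hf).aestronglyMeasurable _
    (ae_norm_dist_approxOn_le_diam hf h₀ hs hfs k)

lemma tendsto_integral_dist_approxOn [SecondCountableTopology α] [IsFiniteMeasure μ]
    (hf : Measurable f) (h₀ : y₀ ∈ s) (hs : Bornology.IsBounded s) (hfs : ∀ᵐ x ∂μ, f x ∈ s) :
    Tendsto (fun k => ∫ x, dist (approxOn f hf s y₀ h₀ k x) (f x) ∂μ) atTop (𝓝 0) := by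
  have hlim : ∀ᵐ x ∂μ, Tendsto (fun k => dist (approxOn f hf s y₀ h₀ k x) (f x)) atTop (𝓝 0) :=
    hfs.mono fun _ hx =>
      tendsto_iff_dist_tendsto_zero.mp (tendsto_approxOn hf h₀ (subset_closure hx))
  simpa using tendsto_integral_of_dominated_convergence _
    (fun k => ((SimpleFunc.measurable _).dist hf).aestronglyMeasurable)
    (integrable_const _) (ae_norm_dist_approxOn_le_diam hf h₀ hs hfs) hlim

end Approximation

lemma integral_comp_simpleFunc {X α F : Type*} [MeasurableSpace X] {μ : Measure X}
    [IsFiniteMeasure μ] [NormedAddCommGroup F] [NormedSpace ℝ F] [CompleteSpace F]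
    (φ : SimpleFunc X α) (g : α → F) :
    ∫ x, g (φ x) ∂μ = ∑ y ∈ φ.range, μ.real (φ ⁻¹' {y}) • g y := by
  have hsplit : (fun x => g (φ x)) =
      fun x => ∑ y ∈ φ.range, (φ ⁻¹' {y}).indicator (fun _ => g y) x := by
    ext x
    rw [Finset.sum_eq_single_of_mem (φ x) (φ.mem_range_self x)]
    · simp
    · exact fun y _ hy => Set.indicator_of_notMem (fun h => hy h.symm) _
  rw [hsplit, integral_finsetSum _ fun y _ =>
    (integrable_const (g y)).indicator (φ.measurableSet_fiber y)]
  exact Finset.sum_congr rfl fun y _ => integral_indicator_const _ (φ.measurableSet_fiber y)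

section MinkowskiMean

variable {n : ℕ}

local notation "E" => EuclideanSpace ℝ (Fin n)

lemma ConvexBody.isometry_toNonemptyCompacts :
    Isometry fun K : ConvexBody E =>
      (⟨⟨K, K.isCompact⟩, K.nonempty⟩ : TopologicalSpace.NonemptyCompacts E) :=
  Isometry.of_dist_eq fun K L => by
    rw [Metric.NonemptyCompacts.dist_eq, ← ConvexBody.hausdorffDist_coe]
    rfl

instance : SecondCountableTopology (ConvexBody E) :=
  ConvexBody.isometry_toNonemptyCompacts.isEmbedding.secondCountableTopology

variable {X : Type*} [MeasurableSpace X] {μ : Measure X}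

def minkowskiMean (μ : Measure X) (φ : SimpleFunc X (ConvexBody E)) : ConvexBody E :=
  ∑ L ∈ φ.range, (μ (φ ⁻¹' {L})).toNNReal • L

lemma exists_fin_sum_smul_eq_minkowskiMean (μ : Measure X) (φ : SimpleFunc X (ConvexBody E)) :
    ∃ (N : ℕ) (c : Fin N → ℝ≥0) (L : Fin N → ConvexBody E),
      (∀ i, L i ∈ Set.range φ) ∧ minkowskiMean μ φ = ∑ i, c i • L i := by
  let e := φ.range.equivFin.symm
  refine ⟨_, fun i => (μ (φ ⁻¹' {(e i : ConvexBody E)})).toNNReal, fun i => e i,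
    fun i => φ.mem_range.mp (e i).2, ?_⟩
  rw [minkowskiMean, ← Finset.sum_coe_sort, ← e.sum_comp]

lemma sfn_minkowskiMean [IsFiniteMeasure μ] (φ : SimpleFunc X (ConvexBody E)) (u : E) :
    sfn (minkowskiMean μ φ) u = ∫ x, sfn (φ x) u ∂μ := by
  rw [minkowskiMean, sfn_sum_smul, integral_comp_simpleFunc φ (sfn · u)]
  rfl

lemma integrable_sfn_of_ae_mem [MeasurableSpace (ConvexBody E)] [BorelSpace (ConvexBody E)]
    [IsFiniteMeasure μ] {f : X → ConvexBody E} (hf : AEMeasurable f μ) {s : Set (ConvexBody E)}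
    (hs : Bornology.IsBounded s) (hfs : ∀ᵐ x ∂μ, f x ∈ s) (u : E) :
    Integrable (fun x => sfn (f x) u) μ := by
  obtain ⟨C, hC⟩ := ((lipschitzWith_sfn u).isBounded_image hs).exists_norm_le
  exact .of_bound ((lipschitzWith_sfn u).continuous.measurable.comp_aemeasurable
    hf).aestronglyMeasurable C (hfs.mono fun x hx => hC _ ⟨_, hx, rfl⟩)

lemma dist_minkowskiMean_le [IsFiniteMeasure μ] {f : X → ConvexBody E} {K : ConvexBody E}
    (hK : ∀ u, sfn K u = ∫ x, sfn (f x) u ∂μ) (hf : ∀ u, Integrable (fun x => sfn (f x) u) μ)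
    (φ : SimpleFunc X (ConvexBody E)) (hφ : Integrable (fun x => dist (φ x) (f x)) μ) :
    dist (minkowskiMean μ φ) K ≤ ∫ x, dist (φ x) (f x) ∂μ := by
  refine dist_le_of_abs_sfn_sub_le (integral_nonneg fun _ => dist_nonneg) fun u => ?_
  have hφu : Integrable (fun x => sfn (φ x) u) μ :=
    (φ.map (sfn · u)).integrable_of_isFiniteMeasure
  rw [sfn_minkowskiMean, hK, ← integral_sub hφu (hf u), ← integral_mul_const ‖u‖,
    ← Real.norm_eq_abs]
  refine norm_integral_le_of_norm_le (hφ.mul_const _) (ae_of_all _ fun x => ?_)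
  simpa [mul_comm, Real.dist_eq] using (lipschitzWith_sfn u).dist_le_mul (φ x) (f x)

end MinkowskiMean

theorem macroid_limit_of_posComb_general {n : ℕ}
    [MeasurableSpace (ConvexBody (EuclideanSpace ℝ (Fin n)))]
    [BorelSpace (ConvexBody (EuclideanSpace ℝ (Fin n)))]
    (𝒦 : Set (ConvexBody (EuclideanSpace ℝ (Fin n))))
    (μ : Measure (ConvexBody (EuclideanSpace ℝ (Fin n)))) [IsProbabilityMeasure μ]
    (hconc : μ 𝒦ᶜ = 0)
    (hbd : Bornology.IsBounded (𝒦 ∩ msupport μ))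
    (K : ConvexBody (EuclideanSpace ℝ (Fin n)))
    (hK : ∀ u, sfn K u = ∫ P, sfn P u ∂μ) :
    ∃ Q : ℕ → ConvexBody (EuclideanSpace ℝ (Fin n)),
      (∀ j, ∃ (N : ℕ) (c : Fin N → ℝ≥0) (L : Fin N → ConvexBody (EuclideanSpace ℝ (Fin n))),
        (∀ i, L i ∈ 𝒦 ∩ msupport μ) ∧ Q j = ∑ i, c i • L i) ∧
      Tendsto Q atTop (𝓝 K) := by
  have hae : ∀ᵐ P ∂μ, P ∈ 𝒦 ∩ msupport μ :=
    inter_mem (mem_ae_iff.mpr hconc) (msupport_eq_support μ ▸ Measure.support_mem_ae)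
  obtain ⟨P₀, hP₀⟩ := hae.exists
  let φ := SimpleFunc.approxOn id measurable_id (𝒦 ∩ msupport μ) P₀ hP₀
  refine ⟨fun j => minkowskiMean μ (φ j), fun j => ?_, ?_⟩
  · obtain ⟨N, c, L, hL, hQ⟩ := exists_fin_sum_smul_eq_minkowskiMean μ (φ j)
    refine ⟨N, c, L, fun i => ?_, hQ⟩
    obtain ⟨P, hP⟩ := hL i
    exact hP ▸ SimpleFunc.approxOn_mem measurable_id hP₀ j P
  · rw [tendsto_iff_dist_tendsto_zero]
    refine squeeze_zero (fun _ => dist_nonneg) (fun j => dist_minkowskiMean_le hK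
      (integrable_sfn_of_ae_mem aemeasurable_id hbd hae)
      (φ j) (integrable_dist_approxOn measurable_id hP₀ hbd hae j)) ?_
    exact tendsto_integral_dist_approxOn measurable_id hP₀ hbd hae

theorem macroid_limit_of_posComb {n : ℕ}
    [MeasurableSpace (ConvexBody (EuclideanSpace ℝ (Fin n)))]
    [BorelSpace (ConvexBody (EuclideanSpace ℝ (Fin n)))]
    (𝒦 : Set (ConvexBody (EuclideanSpace ℝ (Fin n)))) (h𝒦ne : 𝒦.Nonempty)
    (h𝒦meas : MeasurableSet 𝒦)
    (μ : Measure (ConvexBody (EuclideanSpace ℝ (Fin n)))) [IsProbabilityMeasure μ]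
    (hconc : μ 𝒦ᶜ = 0)
    (hbd : Bornology.IsBounded (𝒦 ∩ msupport μ))
    (K : ConvexBody (EuclideanSpace ℝ (Fin n)))
    (hK : ∀ u, sfn K u = ∫ P, sfn P u ∂μ) :
    ∃ Q : ℕ → ConvexBody (EuclideanSpace ℝ (Fin n)),
      (∀ j, ∃ (N : ℕ) (c : Fin N → ℝ≥0) (L : Fin N → ConvexBody (EuclideanSpace ℝ (Fin n))),
        (∀ i, L i ∈ 𝒦 ∩ msupport μ) ∧ Q j = ∑ i, c i • L i) ∧
      Tendsto Q atTop (𝓝 K) :=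
  macroid_limit_of_posComb_general 𝒦 μ hconc hbd K hK
end
end

section
/- Let $K$ be a convex body in $\mathbb{R}^n$ and let $e, f$ be two segments in linearly independent directions, each of which is a summand of $K$. Then the Minkowski sum $e + f$ is a summand of $K$. -/
open scoped Pointwise

noncomputable section

/-- `L` is a summand of `K` if `K = L + M` for some convex body `M`. -/
def IsSummand {n : ℕ} (L K : Set (EuclideanSpace ℝ (Fin n))) : Prop :=
  ∃ M : Set (EuclideanSpace ℝ (Fin n)), Convex ℝ M ∧ IsCompact M ∧ M.Nonempty ∧ K = L + M

namespace SummandAux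


lemma combo2 {Q : Set (ℝ × ℝ)} (hQ : Convex ℝ Q) {x1 y1 x2 y2 θ : ℝ}
    (hp : (x1, y1) ∈ Q) (hq : (x2, y2) ∈ Q) (h0 : 0 ≤ θ) (h1 : θ ≤ 1) :
    ((1 - θ) * x1 + θ * x2, (1 - θ) * y1 + θ * y2) ∈ Q := by
  have h := hQ hp hq (a := 1 - θ) (b := θ) (by linarith) h0 (by ring)
  have e : (1 - θ) • ((x1, y1) : ℝ × ℝ) + θ • ((x2, y2) : ℝ × ℝ)
      = ((1 - θ) * x1 + θ * x2, (1 - θ) * y1 + θ * y2) := by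
    simp [Prod.ext_iff]
  rwa [e] at h

lemma exists_theta {c d e : ℝ} (h1 : c ≤ e) (h2 : e ≤ d) :
    ∃ θ : ℝ, 0 ≤ θ ∧ θ ≤ 1 ∧ e = (1 - θ) * c + θ * d := by
  rcases eq_or_lt_of_le (h1.trans h2) with h | h
  · exact ⟨0, le_rfl, zero_le_one, by rw [← h] at h2;nlinarith⟩
  · have hd : d - c ≠ 0 := by linarith
    refine ⟨(e - c) / (d - c), div_nonneg (by linarith) (by linarith), ?_, ?_⟩
    · rw [div_le_one (by linarith)]; linarith
    · field_simp
      ring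

lemma vert_mem {Q : Set (ℝ × ℝ)} (hQ : Convex ℝ Q) {x c d e : ℝ}
    (hc : (x, c) ∈ Q) (hd : (x, d) ∈ Q) (h1 : c ≤ e) (h2 : e ≤ d) : (x, e) ∈ Q := by
  obtain ⟨θ, h0, hθ1, he⟩ := exists_theta h1 h2
  have h := combo2 hQ hc hd h0 hθ1
  have e1 : (1 - θ) * x + θ * x = x := by ring
  rw [e1, ← he] at h
  exact h

lemma twoD {Q : Set (ℝ × ℝ)} (hQconv : Convex ℝ Q) (hQcomp : IsCompact Q)
    (H1 : ∀ p ∈ Q, ∃ t ∈ Set.Icc (0:ℝ) 1, (p.1 - t, p.2) ∈ Q ∧ (p.1 - t + 1, p.2) ∈ Q)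
    (H2 : ∀ p ∈ Q, ∃ s ∈ Set.Icc (0:ℝ) 1, (p.1, p.2 - s) ∈ Q ∧ (p.1, p.2 - s + 1) ∈ Q)
    {p : ℝ × ℝ} (hp : p ∈ Q) :
    ∃ t ∈ Set.Icc (0:ℝ) 1, ∃ s ∈ Set.Icc (0:ℝ) 1,
      (p.1 - t, p.2 - s) ∈ Q ∧ (p.1 - t + 1, p.2 - s) ∈ Q ∧
      (p.1 - t, p.2 - s + 1) ∈ Q ∧ (p.1 - t + 1, p.2 - s + 1) ∈ Q := by
  obtain ⟨pl, hpl, hmin⟩ := hQcomp.exists_isMinOn ⟨p, hp⟩ continuous_fst.continuousOn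
  obtain ⟨pL, hpL, hmax⟩ := hQcomp.exists_isMaxOn ⟨p, hp⟩ continuous_fst.continuousOn
  set l := pl.1 with hl
  set L := pL.1 with hL
  have shiftl : ∀ μ : ℝ, (l, μ) ∈ Q → (l + 1, μ) ∈ Q := by
    intro μ hμ
    obtain ⟨t, ht, h1, h2⟩ := H1 _ hμ
    simp only at h1 h2
    have hge : l ≤ l - t := isMinOn_iff.mp hmin _ h1
    have ht0 : t = 0 := by linarith [ht.1]
    rw [ht0] at h2
    simpa using h2
  have shiftL : ∀ μ : ℝ, (L, μ) ∈ Q → (L - 1, μ) ∈ Q := by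
    intro μ hμ
    obtain ⟨t, ht, h1, h2⟩ := H1 _ hμ
    simp only at h1 h2
    have hle : L - t + 1 ≤ L := isMaxOn_iff.mp hmax _ h2
    have ht1 : t = 1 := by linarith [ht.2]
    rw [ht1] at h1
    exact h1
  obtain ⟨s₀, hs₀, hA0, hA1⟩ := H2 _ hpl
  obtain ⟨s₁, hs₁, hB0, hB1⟩ := H2 _ hpL
  set yl := pl.2 - s₀ with hyl
  set yL := pL.2 - s₁ with hyL
  have a00 : (l, yl) ∈ Q := hA0
  have a01 : (l, yl + 1) ∈ Q := hA1
  have a10 : (l + 1, yl) ∈ Q := shiftl _ a00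
  have a11 : (l + 1, yl + 1) ∈ Q := shiftl _ a01
  have b10 : (L, yL) ∈ Q := hB0
  have b11 : (L, yL + 1) ∈ Q := hB1
  have b00 : (L - 1, yL) ∈ Q := shiftL _ b10
  have b01 : (L - 1, yL + 1) ∈ Q := shiftL _ b11
  obtain ⟨t, ht, hx0, hx1⟩ := H1 _ hp
  set x := p.1 - t with hx
  have hxl : l ≤ x := isMinOn_iff.mp hmin _ hx0
  have hxL : x + 1 ≤ L := isMaxOn_iff.mp hmax _ hx1
  obtain ⟨θ, hθ0, hθ1, hxeq⟩ := exists_theta hxl (show x ≤ L - 1 by linarith)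
  set ν := (1 - θ) * yl + θ * yL with hν
  have c00 : (x, ν) ∈ Q := by
    have h := combo2 hQconv a00 b00 hθ0 hθ1
    rw [← hxeq] at h
    exact h
  have c10 : (x + 1, ν) ∈ Q := by
    have h := combo2 hQconv a10 b10 hθ0 hθ1
    have e : (1 - θ) * (l + 1) + θ * L = x + 1 := by rw [hxeq]; ring
    rw [e] at h
    exact h
  have c01 : (x, ν + 1) ∈ Q := by
    have h := combo2 hQconv a01 b01 hθ0 hθ1
    have e : (1 - θ) * (yl + 1) + θ * (yL + 1) = ν + 1 := by rw [hν]; ring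
    rw [← hxeq, e] at h
    exact h
  have c11 : (x + 1, ν + 1) ∈ Q := by
    have h := combo2 hQconv a11 b11 hθ0 hθ1
    have e : (1 - θ) * (l + 1) + θ * L = x + 1 := by rw [hxeq]; ring
    have e2 : (1 - θ) * (yl + 1) + θ * (yL + 1) = ν + 1 := by rw [hν]; ring
    rw [e, e2] at h
    exact h
  rcases le_total p.2 ν with hc | hc
  · refine ⟨t, ht, 0, ⟨le_rfl, zero_le_one⟩, ?_, ?_, ?_, ?_⟩ <;> rw [← hx] <;>
      simp only [sub_zero]
    · exact hx0
    · exact hx1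
    · exact vert_mem hQconv hx0 c01 (by linarith) (by linarith)
    · exact vert_mem hQconv hx1 c11 (by linarith) (by linarith)
  · rcases le_total p.2 (ν + 1) with hc2 | hc2
    · refine ⟨t, ht, p.2 - ν, ⟨by linarith, by linarith⟩, ?_, ?_, ?_, ?_⟩ <;> rw [← hx]
      · rw [show p.2 - (p.2 - ν) = ν from by ring]; exact c00
      · rw [show p.2 - (p.2 - ν) = ν from by ring]; exact c10
      · rw [show p.2 - (p.2 - ν) + 1 = ν + 1 from by ring]; exact c01
      · rw [show p.2 - (p.2 - ν) + 1 = ν + 1 from by ring]; exact c11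
    · refine ⟨t, ht, 1, ⟨zero_le_one, le_rfl⟩, ?_, ?_, ?_, ?_⟩ <;> rw [← hx]
      · exact vert_mem hQconv c00 hx0 (by linarith) (by linarith)
      · exact vert_mem hQconv c10 hx1 (by linarith) (by linarith)
      · rw [show p.2 - 1 + 1 = p.2 from by ring]; exact hx0
      · rw [show p.2 - 1 + 1 = p.2 from by ring]; exact hx1


lemma corners {n : ℕ} (K : Set (EuclideanSpace ℝ (Fin n))) (hconv : Convex ℝ K)
    (hcomp : IsCompact K) (u v : EuclideanSpace ℝ (Fin n))
    (hind : LinearIndependent ℝ ![u, v])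
    (H1 : ∀ w ∈ K, ∃ t ∈ Set.Icc (0:ℝ) 1, w - t • u ∈ K ∧ w - t • u + u ∈ K)
    (H2 : ∀ w ∈ K, ∃ s ∈ Set.Icc (0:ℝ) 1, w - s • v ∈ K ∧ w - s • v + v ∈ K)
    {z : EuclideanSpace ℝ (Fin n)} (hz : z ∈ K) :
    ∃ t ∈ Set.Icc (0:ℝ) 1, ∃ s ∈ Set.Icc (0:ℝ) 1,
      z - t • u - s • v ∈ K ∧ z - t • u - s • v + u ∈ K ∧
      z - t • u - s • v + v ∈ K ∧ z - t • u - s • v + u + v ∈ K := by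
  set Q : Set (ℝ × ℝ) := {q | z + q.1 • u + q.2 • v ∈ K} with hQdef
  have hQconv : Convex ℝ Q := by
    intro q1 hq1 q2 hq2 α β hα hβ hαβ
    have hβ' : β = 1 - α := by linarith
    subst hβ'
    show z + (α • q1 + (1 - α) • q2).1 • u + (α • q1 + (1 - α) • q2).2 • v ∈ K
    have key : z + (α • q1 + (1 - α) • q2).1 • u + (α • q1 + (1 - α) • q2).2 • v
        = α • (z + q1.1 • u + q1.2 • v) + (1 - α) • (z + q2.1 • u + q2.2 • v) := by
      simp only [Prod.fst_add, Prod.snd_add, Prod.smul_fst, Prod.smul_snd, smul_eq_mul]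
      module
    rw [key]
    exact hconv hq1 hq2 hα (by linarith) (by ring)
  have hQclosed : IsClosed Q := by
    have hcont : Continuous fun q : ℝ × ℝ => z + q.1 • u + q.2 • v := by fun_prop
    exact hcomp.isClosed.preimage hcont
  -- boundedness
  obtain ⟨C, hC⟩ := isBounded_iff_forall_norm_le.mp hcomp.isBounded
  set f : ℝ × ℝ →ₗ[ℝ] EuclideanSpace ℝ (Fin n) :=
    (LinearMap.fst ℝ ℝ ℝ).smulRight u + (LinearMap.snd ℝ ℝ ℝ).smulRight v with hfdef
  have hfapp : ∀ q : ℝ × ℝ, f q = q.1 • u + q.2 • v := by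
    intro q; simp [hfdef]
  have hker : LinearMap.ker f = ⊥ := by
    rw [LinearMap.ker_eq_bot']
    intro m hm
    rw [hfapp] at hm
    obtain ⟨h1, h2⟩ := LinearIndependent.pair_iff.mp hind m.1 m.2 hm
    exact Prod.ext h1 h2
  obtain ⟨Kc, hKc, hanti⟩ := f.exists_antilipschitzWith hker
  have hQbdd : Bornology.IsBounded Q := by
    rw [isBounded_iff_forall_norm_le]
    refine ⟨Kc * (C + ‖z‖), fun q hq => ?_⟩
    have h3 : ‖q‖ ≤ Kc * ‖f q‖ := by
      have := hanti.le_mul_dist q 0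
      simpa [dist_eq_norm, map_zero] using this
    have h1 : f q = (z + q.1 • u + q.2 • v) - z := by rw [hfapp]; abel
    have h2 : ‖f q‖ ≤ C + ‖z‖ := by
      rw [h1]
      calc ‖(z + q.1 • u + q.2 • v) - z‖ ≤ ‖z + q.1 • u + q.2 • v‖ + ‖z‖ := norm_sub_le _ _
        _ ≤ C + ‖z‖ := by have := hC _ hq; linarith
    calc ‖q‖ ≤ Kc * ‖f q‖ := h3
      _ ≤ Kc * (C + ‖z‖) := by
          exact mul_le_mul_of_nonneg_left h2 (Kc.coe_nonneg)
  have hQcomp : IsCompact Q := Metric.isCompact_iff_isClosed_bounded.mpr ⟨hQclosed, hQbdd⟩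
  have H1' : ∀ q ∈ Q, ∃ t ∈ Set.Icc (0:ℝ) 1, (q.1 - t, q.2) ∈ Q ∧ (q.1 - t + 1, q.2) ∈ Q := by
    intro q hq
    obtain ⟨t, ht, h1, h2⟩ := H1 _ hq
    refine ⟨t, ht, ?_, ?_⟩
    · show z + (q.1 - t) • u + q.2 • v ∈ K
      have e : z + (q.1 - t) • u + q.2 • v = (z + q.1 • u + q.2 • v) - t • u := by module
      rw [e]; exact h1
    · show z + (q.1 - t + 1) • u + q.2 • v ∈ K
      have e : z + (q.1 - t + 1) • u + q.2 • v = (z + q.1 • u + q.2 • v) - t • u + u := by module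
      rw [e]; exact h2
  have H2' : ∀ q ∈ Q, ∃ s ∈ Set.Icc (0:ℝ) 1, (q.1, q.2 - s) ∈ Q ∧ (q.1, q.2 - s + 1) ∈ Q := by
    intro q hq
    obtain ⟨s, hs, h1, h2⟩ := H2 _ hq
    refine ⟨s, hs, ?_, ?_⟩
    · show z + q.1 • u + (q.2 - s) • v ∈ K
      have e : z + q.1 • u + (q.2 - s) • v = (z + q.1 • u + q.2 • v) - s • v := by module
      rw [e]; exact h1
    · show z + q.1 • u + (q.2 - s + 1) • v ∈ K
      have e : z + q.1 • u + (q.2 - s + 1) • v = (z + q.1 • u + q.2 • v) - s • v + v := by module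
      rw [e]; exact h2
  have h00 : ((0 : ℝ), (0 : ℝ)) ∈ Q := by
    show z + (0:ℝ) • u + (0:ℝ) • v ∈ K
    simpa using hz
  obtain ⟨t, ht, s, hs, g1, g2, g3, g4⟩ := twoD hQconv hQcomp H1' H2' h00
  simp only at g1 g2 g3 g4
  refine ⟨t, ht, s, hs, ?_, ?_, ?_, ?_⟩
  · have e : z - t • u - s • v = z + ((0:ℝ) - t) • u + ((0:ℝ) - s) • v := by module
    rw [e]; exact g1
  · have e : z - t • u - s • v + u = z + ((0:ℝ) - t + 1) • u + ((0:ℝ) - s) • v := by module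
    rw [e]; exact g2
  · have e : z - t • u - s • v + v = z + ((0:ℝ) - t) • u + ((0:ℝ) - s + 1) • v := by module
    rw [e]; exact g3
  · have e : z - t • u - s • v + u + v = z + ((0:ℝ) - t + 1) • u + ((0:ℝ) - s + 1) • v := by
      module
    rw [e]; exact g4


end SummandAux

open SummandAux in
theorem sum_of_segment_summands {n : ℕ}
    (K : ConvexBody (EuclideanSpace ℝ (Fin n)))
    (a b c d : EuclideanSpace ℝ (Fin n))
    (hind : LinearIndependent ℝ ![b - a, d - c])
    (he : IsSummand (segment ℝ a b) (K : Set (EuclideanSpace ℝ (Fin n))))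
    (hf : IsSummand (segment ℝ c d) (K : Set (EuclideanSpace ℝ (Fin n)))) :
    IsSummand (segment ℝ a b + segment ℝ c d) (K : Set (EuclideanSpace ℝ (Fin n))) := by
  obtain ⟨M₁, _, _, _, hK1⟩ := he
  obtain ⟨M₂, _, _, _, hK2⟩ := hf
  have H1 : ∀ w ∈ (K : Set (EuclideanSpace ℝ (Fin n))), ∃ t ∈ Set.Icc (0:ℝ) 1,
      w - t • (b - a) ∈ (K : Set (EuclideanSpace ℝ (Fin n))) ∧
      w - t • (b - a) + (b - a) ∈ (K : Set (EuclideanSpace ℝ (Fin n))) := by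
    intro w hw
    rw [hK1, Set.mem_add] at hw
    obtain ⟨pt, hpt, m, hm, hpm⟩ := hw
    rw [segment_eq_image'] at hpt
    obtain ⟨t, ht, rfl⟩ := hpt
    subst hpm
    refine ⟨t, ht, ?_, ?_⟩
    · have e1 : a + t • (b - a) + m - t • (b - a) = a + m := by module
      rw [e1, hK1]
      exact Set.add_mem_add (left_mem_segment ℝ a b) hm
    · have e2 : a + t • (b - a) + m - t • (b - a) + (b - a) = b + m := by module
      rw [e2, hK1]
      exact Set.add_mem_add (right_mem_segment ℝ a b) hm
  have H2 : ∀ w ∈ (K : Set (EuclideanSpace ℝ (Fin n))), ∃ s ∈ Set.Icc (0:ℝ) 1,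
      w - s • (d - c) ∈ (K : Set (EuclideanSpace ℝ (Fin n))) ∧
      w - s • (d - c) + (d - c) ∈ (K : Set (EuclideanSpace ℝ (Fin n))) := by
    intro w hw
    rw [hK2, Set.mem_add] at hw
    obtain ⟨pt, hpt, m, hm, hpm⟩ := hw
    rw [segment_eq_image'] at hpt
    obtain ⟨s, hs, rfl⟩ := hpt
    subst hpm
    refine ⟨s, hs, ?_, ?_⟩
    · have e1 : c + s • (d - c) + m - s • (d - c) = c + m := by module
      rw [e1, hK2]
      exact Set.add_mem_add (left_mem_segment ℝ c d) hm
    · have e2 : c + s • (d - c) + m - s • (d - c) + (d - c) = d + m := by module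
      rw [e2, hK2]
      exact Set.add_mem_add (right_mem_segment ℝ c d) hm
  have key : ∀ z ∈ (K : Set (EuclideanSpace ℝ (Fin n))),
      ∃ t ∈ Set.Icc (0:ℝ) 1, ∃ s ∈ Set.Icc (0:ℝ) 1,
        z - t • (b - a) - s • (d - c) ∈ (K : Set (EuclideanSpace ℝ (Fin n))) ∧
        z - t • (b - a) - s • (d - c) + (b - a) ∈ (K : Set (EuclideanSpace ℝ (Fin n))) ∧
        z - t • (b - a) - s • (d - c) + (d - c) ∈ (K : Set (EuclideanSpace ℝ (Fin n))) ∧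
        z - t • (b - a) - s • (d - c) + (b - a) + (d - c) ∈ (K : Set (EuclideanSpace ℝ (Fin n))) :=
    fun z hz => corners (K : Set (EuclideanSpace ℝ (Fin n))) K.convex K.isCompact
      (b - a) (d - c) hind H1 H2 hz
  -- the summand
  set M : Set (EuclideanSpace ℝ (Fin n)) :=
    ((fun x => a + c + x) ⁻¹' (K : Set (EuclideanSpace ℝ (Fin n)))) ∩
    ((fun x => a + c + (b - a) + x) ⁻¹' (K : Set (EuclideanSpace ℝ (Fin n)))) ∩
    ((fun x => a + c + (d - c) + x) ⁻¹' (K : Set (EuclideanSpace ℝ (Fin n)))) ∩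
    ((fun x => a + c + (b - a) + (d - c) + x) ⁻¹' (K : Set (EuclideanSpace ℝ (Fin n)))) with hM
  have hMconv : Convex ℝ M := by
    refine (((?_ : Convex ℝ _).inter ?_).inter ?_).inter ?_ <;>
      exact (K.convex.translate_preimage_right _)
  have hMclosed : IsClosed M := by
    have hK := K.isCompact.isClosed
    refine ((IsClosed.inter (IsClosed.inter (IsClosed.inter ?_ ?_) ?_) ?_)) <;>
      exact hK.preimage (by fun_prop)
  have hMbdd : Bornology.IsBounded M := by
    obtain ⟨C, hC⟩ := isBounded_iff_forall_norm_le.mp K.isCompact.isBounded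
    rw [isBounded_iff_forall_norm_le]
    refine ⟨C + ‖a + c‖, fun x hx => ?_⟩
    have h1 : a + c + x ∈ (K : Set (EuclideanSpace ℝ (Fin n))) := hx.1.1.1
    have := hC _ h1
    calc ‖x‖ = ‖(a + c + x) - (a + c)‖ := by congr 1; abel
      _ ≤ ‖a + c + x‖ + ‖a + c‖ := norm_sub_le _ _
      _ ≤ C + ‖a + c‖ := by linarith
  have hMcomp : IsCompact M := Metric.isCompact_iff_isClosed_bounded.mpr ⟨hMclosed, hMbdd⟩
  -- membership description of M
  have hMmem : ∀ x, x ∈ M ↔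
      (a + c + x ∈ (K : Set (EuclideanSpace ℝ (Fin n))) ∧
       a + c + (b - a) + x ∈ (K : Set (EuclideanSpace ℝ (Fin n))) ∧
       a + c + (d - c) + x ∈ (K : Set (EuclideanSpace ℝ (Fin n))) ∧
       a + c + (b - a) + (d - c) + x ∈ (K : Set (EuclideanSpace ℝ (Fin n)))) := by
    intro x
    simp only [hM, Set.mem_inter_iff, Set.mem_preimage]
    tauto
  -- from a point of K, produce the decomposition
  have decomp : ∀ z ∈ (K : Set (EuclideanSpace ℝ (Fin n))),
      ∃ t ∈ Set.Icc (0:ℝ) 1, ∃ s ∈ Set.Icc (0:ℝ) 1,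
        z - t • (b - a) - s • (d - c) - (a + c) ∈ M := by
    intro z hz
    obtain ⟨t, ht, s, hs, g1, g2, g3, g4⟩ := key z hz
    refine ⟨t, ht, s, hs, (hMmem _).mpr ⟨?_, ?_, ?_, ?_⟩⟩
    · have e : a + c + (z - t • (b - a) - s • (d - c) - (a + c))
          = z - t • (b - a) - s • (d - c) := by abel
      rw [e]; exact g1
    · have e : a + c + (b - a) + (z - t • (b - a) - s • (d - c) - (a + c))
          = z - t • (b - a) - s • (d - c) + (b - a) := by abel
      rw [e]; exact g2
    · have e : a + c + (d - c) + (z - t • (b - a) - s • (d - c) - (a + c))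
          = z - t • (b - a) - s • (d - c) + (d - c) := by abel
      rw [e]; exact g3
    · have e : a + c + (b - a) + (d - c) + (z - t • (b - a) - s • (d - c) - (a + c))
          = z - t • (b - a) - s • (d - c) + (b - a) + (d - c) := by abel
      rw [e]; exact g4
  have hMne : M.Nonempty := by
    obtain ⟨z, hz⟩ := K.nonempty
    obtain ⟨t, _, s, _, hmem⟩ := decomp z hz
    exact ⟨_, hmem⟩
  refine ⟨M, hMconv, hMcomp, hMne, ?_⟩
  ext z
  constructor
  · intro hz
    obtain ⟨t, ht, s, hs, hmem⟩ := decomp z hz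
    rw [Set.mem_add]
    refine ⟨(a + t • (b - a)) + (c + s • (d - c)), ?_, z - t • (b - a) - s • (d - c) - (a + c),
      hmem, by abel⟩
    exact Set.add_mem_add
      (by rw [segment_eq_image']; exact ⟨t, ht, rfl⟩)
      (by rw [segment_eq_image']; exact ⟨s, hs, rfl⟩)
  · intro hz
    rw [Set.mem_add] at hz
    obtain ⟨w, hw, m, hm, hwm⟩ := hz
    rw [Set.mem_add] at hw
    obtain ⟨p, hp, q, hq, hpq⟩ := hw
    rw [segment_eq_image'] at hp hq
    obtain ⟨t, ht, rfl⟩ := hp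
    obtain ⟨s, hs, rfl⟩ := hq
    obtain ⟨m1, m2, m3, m4⟩ := (hMmem m).mp hm
    subst hpq
    subst hwm
    -- two-step convex combination of the four corners
    have k1 : a + c + m + t • (b - a) ∈ (K : Set (EuclideanSpace ℝ (Fin n))) := by
      have h := K.convex m1 m2 (a := 1 - t) (b := t) (by linarith [ht.2]) ht.1 (by ring)
      have e : (1 - t) • (a + c + m) + t • (a + c + (b - a) + m)
          = a + c + m + t • (b - a) := by module
      rwa [e] at h
    have k2 : a + c + m + t • (b - a) + (d - c) ∈ (K : Set (EuclideanSpace ℝ (Fin n))) := by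
      have h := K.convex m3 m4 (a := 1 - t) (b := t) (by linarith [ht.2]) ht.1 (by ring)
      have e : (1 - t) • (a + c + (d - c) + m) + t • (a + c + (b - a) + (d - c) + m)
          = a + c + m + t • (b - a) + (d - c) := by module
      rwa [e] at h
    have h := K.convex k1 k2 (a := 1 - s) (b := s) (by linarith [hs.2]) hs.1 (by ring)
    have e : (1 - s) • (a + c + m + t • (b - a)) + s • (a + c + m + t • (b - a) + (d - c))
        = a + t • (b - a) + (c + s • (d - c)) + m := by module
    rwa [e] at h
end
end

section
/- Every polytope $P \subset \mathbb{R}^n$ has a unique inclusion-maximal zonotope summand centered at the origin, denoted $\zeta(P)$; moreover, every zonotope summand of $P$ is a translate of a summand of $\zeta(P)$. -/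
open scoped Pointwise

noncomputable section

/-- A zonotope: a finite Minkowski sum of segments. -/
def IsZonotope {n : ℕ} (Z : Set (EuclideanSpace ℝ (Fin n))) : Prop :=
  ∃ (N : ℕ) (a b : Fin N → EuclideanSpace ℝ (Fin n)), Z = ∑ i, segment ℝ (a i) (b i)

/-!
A segment `[0, z]` is a summand of a convex body `K` exactly when every point of `K` lies on a
translate of `[0, z]` inside `K`, the complement being the erosion `K ∩ (K - z)`. Peeling off such
a segment keeps every non-parallel segment summand (a planar argument), and for a polytope only
edge directions occur. So `ζ(P)` is the sum of the centered segments of maximal length in the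
finitely many edge directions. A zonotope summand of `P` splits by directions into parallel
segments no longer than these, hence is a translate of a summand of `ζ(P)`; uniqueness follows
from central symmetry and the cancellation law for compact sets under Minkowski addition.
-/

open Set Submodule
open scoped LinearAlgebra.Projectivization

section General

variable {E : Type*} [NormedAddCommGroup E] [NormedSpace ℝ E]

def IsConvexBody (K : Set E) : Prop := Convex ℝ K ∧ IsCompact K ∧ K.Nonempty

theorem IsConvexBody.add {K L : Set E} (hK : IsConvexBody K) (hL : IsConvexBody L) :
    IsConvexBody (K + L) :=
  ⟨hK.1.add hL.1, hK.2.1.add hL.2.1, hK.2.2.add hL.2.2⟩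

theorem IsConvexBody.smul {K : Set E} (hK : IsConvexBody K) (t : ℝ) : IsConvexBody (t • K) :=
  ⟨hK.1.smul t, hK.2.1.smul t, hK.2.2.smul_set⟩

theorem isConvexBody_singleton (x : E) : IsConvexBody ({x} : Set E) :=
  ⟨convex_singleton x, isCompact_singleton, singleton_nonempty x⟩

theorem isConvexBody_segment (a b : E) : IsConvexBody (segment ℝ a b) :=
  ⟨convex_segment a b, convexHull_pair (𝕜 := ℝ) a b ▸ (toFinite {a, b}).isCompact_convexHull ℝ,
    ⟨a, left_mem_segment ℝ a b⟩⟩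

theorem IsConvexBody.sum {ι : Type*} (s : Finset ι) {K : ι → Set E}
    (hK : ∀ i ∈ s, IsConvexBody (K i)) : IsConvexBody (∑ i ∈ s, K i) :=
  Finset.sum_induction K IsConvexBody (fun _ _ => IsConvexBody.add) (isConvexBody_singleton 0) hK

theorem IsCompact.eq_zero_of_add_eq_self {K D : Set E} (hK : IsCompact K) (hKne : K.Nonempty)
    (hD : D.Nonempty) (h : K + D = K) : D = 0 := by
  refine (hD.subset_singleton_iff).1 fun d hd => ?_
  by_contra hd0
  obtain ⟨f, hf⟩ := SeparatingDual.exists_eq_one (R := ℝ) hd0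
  obtain ⟨x, hx, hmax⟩ := hK.exists_isMaxOn hKne f.continuous.continuousOn
  have : f (x + d) ≤ f x := hmax (h ▸ add_mem_add hx hd)
  rw [map_add, hf] at this
  linarith

theorem exists_eq_one_eq_zero_of_notMem_span [FiniteDimensional ℝ E] {v w : E}
    (h : v ∉ ℝ ∙ w) : ∃ f : StrongDual ℝ E, f v = 1 ∧ f w = 0 := by
  obtain ⟨g, hg, hgv⟩ := LinearMap.exists_extend_of_notMem (0 : (ℝ ∙ w) →ₗ[ℝ] ℝ) h 1
  exact ⟨LinearMap.toContinuousLinearMap g, hgv,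
    by simpa using LinearMap.congr_fun hg ⟨w, mem_span_singleton_self w⟩⟩

theorem Projectivization.mem_span_rep_iff {v : E} (hv : v ≠ 0) (q : ℙ ℝ E) :
    v ∈ ℝ ∙ q.rep ↔ Projectivization.mk ℝ v hv = q := by
  conv_rhs => rw [← q.mk_rep]
  rw [Projectivization.mk_eq_mk_iff', mem_span_singleton]

theorem Projectivization.smul_rep_notMem_span {p q : ℙ ℝ E} (hpq : p ≠ q) {a : ℝ} (ha : a ≠ 0)
    (b : ℝ) : a • p.rep ∉ ℝ ∙ (b • q.rep) := by
  have hne : a • p.rep ≠ 0 := smul_ne_zero ha p.rep_nonzero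
  intro hmem
  have hp := (mem_span_rep_iff hne p).1 (smul_mem _ a (mem_span_singleton_self _))
  exact hpq (hp ▸ (mem_span_rep_iff hne q).1 (span_singleton_smul_le ℝ b q.rep hmem))

theorem IsExposed.subset_convexHull_inter {s F : Set E} (hs : s.Finite)
    (hF : IsExposed ℝ (convexHull ℝ s) F) : F ⊆ convexHull ℝ (s ∩ F) := by
  have hFc : IsCompact F := hF.isCompact (hs.isCompact_convexHull ℝ)
  have hext : F.extremePoints ℝ ⊆ s ∩ F := fun x hx =>
    ⟨extremePoints_convexHull_subset (hF.isExtreme.extremePoints_subset_extremePoints hx),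
      extremePoints_subset hx⟩
  calc F = closure (convexHull ℝ (F.extremePoints ℝ)) :=
        (closure_convexHull_extremePoints hFc (hF.convex (convex_convexHull ℝ s))).symm
    _ ⊆ closure (convexHull ℝ (s ∩ F)) := closure_mono (convexHull_mono hext)
    _ = convexHull ℝ (s ∩ F) := ((hs.inter_of_left F).isCompact_convexHull ℝ).isClosed.closure_eq

end General

section SegmentCovered

variable {E : Type*} [NormedAddCommGroup E]

/-- For convex `K` this is the Minkowski difference `K ⊖ [0, z]`. -/
def erosion (K : Set E) (z : E) : Set E := {x | x ∈ K ∧ x + z ∈ K}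

theorem erosion_mono {K F : Set E} {z : E} (h : K ⊆ F) : erosion K z ⊆ erosion F z :=
  fun _ hx => ⟨h hx.1, h hx.2⟩

theorem erosion_zero (K : Set E) : erosion K 0 = K := by
  simp [erosion]

theorem IsCompact.erosion {K : Set E} (hK : IsCompact K) (z : E) : IsCompact (erosion K z) :=
  hK.inter_right (hK.isClosed.preimage (continuous_add_const z))

variable [NormedSpace ℝ E]

/-- For convex `K` this says that `[0, z]` is a summand of `K`, with complement `erosion K z`. -/
def SegmentCovered (K : Set E) (z : E) : Prop :=
  ∀ x ∈ K, ∃ y ∈ erosion K z, ∃ σ ∈ Icc (0 : ℝ) 1, x = y + σ • z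

variable {K F : Set E} {z z' : E}

theorem Convex.erosion (hK : Convex ℝ K) (z : E) : Convex ℝ (erosion K z) :=
  hK.inter (hK.translate_preimage_left z)

theorem segmentCovered_zero (K : Set E) : SegmentCovered K 0 :=
  fun x hx => ⟨x, ⟨hx, by simpa using hx⟩, 0, left_mem_Icc.2 zero_le_one, by simp⟩

theorem SegmentCovered.erosion_nonempty (h : SegmentCovered K z) (hK : K.Nonempty) :
    (erosion K z).Nonempty :=
  let ⟨_, hx⟩ := hK
  let ⟨y, hy, _⟩ := h _ hx
  ⟨y, hy⟩

theorem SegmentCovered.eq_segment_add_erosion (h : SegmentCovered K z) (hK : Convex ℝ K) :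
    K = segment ℝ 0 z + erosion K z := by
  refine subset_antisymm (fun x hx => ?_) ?_
  · obtain ⟨y, hy, σ, hσ, rfl⟩ := h x hx
    exact add_comm y _ ▸ add_mem_add (segment_eq_image' ℝ 0 z ▸ ⟨σ, hσ, by simp⟩) hy
  · rintro _ ⟨_, hs, y, hy, rfl⟩
    rw [segment_eq_image'] at hs
    obtain ⟨σ, hσ, rfl⟩ := hs
    simpa [add_comm] using hK.add_smul_mem hy.1 hy.2 hσ

theorem SegmentCovered.inter (h : SegmentCovered K z) (hF : ∀ x ∈ F, ∀ t : ℝ, x + t • z ∈ F) :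
    SegmentCovered (K ∩ F) z := by
  rintro x ⟨hxK, hxF⟩
  obtain ⟨y, hy, σ, hσ, rfl⟩ := h x hxK
  have hyF : y ∈ F := by simpa using hF _ hxF (-σ)
  exact ⟨y, ⟨⟨hy.1, hyF⟩, hy.2, by simpa using hF y hyF 1⟩, σ, hσ, rfl⟩

theorem SegmentCovered.norm_le_diam (h : SegmentCovered K z) (hK : Bornology.IsBounded K)
    (hne : K.Nonempty) : ‖z‖ ≤ Metric.diam K := by
  obtain ⟨x, hx⟩ := hne
  obtain ⟨y, hy, -⟩ := h x hx
  simpa [dist_eq_norm] using Metric.dist_le_diam_of_mem hK hy.2 hy.1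

theorem SegmentCovered.sub_mem_of_isMaxOn (h : SegmentCovered K z) {f : StrongDual ℝ E}
    (hfz : f z = 1) {r : E} (hr : r ∈ K) (hmax : IsMaxOn f K r) : r - z ∈ K := by
  obtain ⟨y, hy, σ, hσ, rfl⟩ := h r hr
  have : f (y + z) ≤ f (y + σ • z) := hmax hy.2
  simp only [map_add, map_smul, hfz, smul_eq_mul, mul_one, add_le_add_iff_left] at this
  obtain rfl : σ = 1 := le_antisymm hσ.2 this
  simpa using hy.1

theorem SegmentCovered.add_mem_of_isMinOn (h : SegmentCovered K z) {f : StrongDual ℝ E}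
    (hfz : f z = 1) {r : E} (hr : r ∈ K) (hmin : IsMinOn f K r) : r + z ∈ K := by
  obtain ⟨y, hy, σ, hσ, rfl⟩ := h r hr
  have : f (y + σ • z) ≤ f y := hmin hy.1
  simp only [map_add, map_smul, hfz, smul_eq_mul, mul_one, add_le_iff_nonpos_right] at this
  obtain rfl : σ = 0 := le_antisymm this hσ.1
  simpa using hy.2

theorem SegmentCovered.exists_mem_erosion_erosion_of_isMaxOn (hz : SegmentCovered K z)
    (hz' : SegmentCovered K z') {f : StrongDual ℝ E} (hfz : f z = 1) (hfz' : f z' = 0) {r : E}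
    (hr : r ∈ K) (hmax : IsMaxOn f K r) : ∃ A ∈ erosion (erosion K z) z', f A = f r - 1 := by
  obtain ⟨y, hy, σ, -, rfl⟩ := hz' r hr
  have hfy : f (y + σ • z') = f y := by simp [hfz']
  have hmax₁ : IsMaxOn f K y := fun x hx => hfy ▸ hmax hx
  have hmax₂ : IsMaxOn f K (y + z') := fun x hx => by simpa [hfz', hfy] using hmax hx
  refine ⟨y - z, ⟨⟨hz.sub_mem_of_isMaxOn hfz hy.1 hmax₁, by simpa using hy.1⟩, ?_, ?_⟩, ?_⟩
  · simpa [sub_add_eq_add_sub] using hz.sub_mem_of_isMaxOn hfz hy.2 hmax₂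
  · simpa [sub_add_eq_add_sub] using hy.2
  · simp [hfy, hfz]

theorem SegmentCovered.exists_mem_erosion_erosion_of_isMinOn (hz : SegmentCovered K z)
    (hz' : SegmentCovered K z') {f : StrongDual ℝ E} (hfz : f z = 1) (hfz' : f z' = 0) {r : E}
    (hr : r ∈ K) (hmin : IsMinOn f K r) : ∃ A ∈ erosion (erosion K z) z', f A = f r := by
  obtain ⟨y, hy, σ, -, rfl⟩ := hz' r hr
  have hfy : f (y + σ • z') = f y := by simp [hfz']
  have hmin₁ : IsMinOn f K y := fun x hx => hfy ▸ hmin hx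
  have hmin₂ : IsMinOn f K (y + z') := fun x hx => by simpa [hfz', hfy] using hmin hx
  exact ⟨y, ⟨⟨hy.1, hz.add_mem_of_isMinOn hfz hy.1 hmin₁⟩, hy.2,
    hz.add_mem_of_isMinOn hfz hy.2 hmin₂⟩, hfy.symm⟩

theorem exists_mem_erosion_of_add_smul_mem {C : Set E} (hC : Convex ℝ C) {p v : E}
    (hp : p ∈ C) {b : ℝ} (hA : p + b • v ∈ erosion C v) :
    ∃ y ∈ erosion C v, ∃ σ ∈ Icc (0 : ℝ) 1, p = y + σ • v := by
  rcases lt_or_ge b (-1) with hb | hb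
  · have hpv : p - v ∈ C := by
      convert hC.add_smul_mem hp hA.1 (t := (-b)⁻¹)
        ⟨inv_nonneg.2 (by linarith), inv_le_one_of_one_le₀ (by linarith)⟩ using 1
      rw [smul_smul, inv_neg, neg_mul, inv_mul_cancel₀ (by linarith)]
      module
    exact ⟨p - v, ⟨hpv, by simpa using hp⟩, 1, right_mem_Icc.2 zero_le_one, by simp⟩
  rcases le_or_gt b 0 with hb' | hb'
  · exact ⟨_, hA, -b, ⟨by linarith, by linarith⟩, by module⟩
  · have hpv : p + v ∈ C := by
      have hb1 : p + (b + 1) • v ∈ C := by convert hA.2 using 1; module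
      convert hC.add_smul_mem hp hb1 (t := (b + 1)⁻¹)
        ⟨by positivity, inv_le_one_of_one_le₀ (by linarith)⟩ using 1
      rw [smul_smul, inv_mul_cancel₀ (by linarith), one_smul]
    exact ⟨p, ⟨hp, hpv⟩, 0, left_mem_Icc.2 zero_le_one, by simp⟩

end SegmentCovered

section Directions

variable {E : Type*} [NormedAddCommGroup E] [NormedSpace ℝ E] [FiniteDimensional ℝ E]
  {K : Set E} {z z' : E}

/-- In the plane through `p` spanned by `z` and `z'`, take `f` with `f z = 1` and `f z' = 0`. The
translates of `[0, z']` at the top and at the bottom of `K` (for `f`) survive peeling off `[0, z]`,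
hence by convexity so does one at the height of `p`; it lies on the line through `p` parallel
to `z'`. -/
theorem SegmentCovered.erosion_of_notMem_span (hK : Convex ℝ K) (hKc : IsCompact K)
    (hzz' : z ∉ ℝ ∙ z') (hz : SegmentCovered K z) (hz' : SegmentCovered K z') :
    SegmentCovered (erosion K z) z' := by
  intro p hp
  obtain ⟨f, hfz, hfz'⟩ := exists_eq_one_eq_zero_of_notMem_span hzz'
  let L : AffineSubspace ℝ E := AffineSubspace.mk' p (span ℝ {z, z'})
  have hL : ∀ x ∈ L, ∀ v ∈ span ℝ {z, z'}, x + v ∈ L := fun x hx v hv => by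
    rw [AffineSubspace.mem_mk', vsub_eq_sub, add_sub_right_comm]
    exact add_mem (AffineSubspace.mem_mk'.1 hx) hv
  have hLz : ∀ x ∈ L, ∀ t : ℝ, x + t • z ∈ L := fun x hx t =>
    hL x hx _ (smul_mem _ t (subset_span (by simp)))
  have hLz' : ∀ x ∈ L, ∀ t : ℝ, x + t • z' ∈ L := fun x hx t =>
    hL x hx _ (smul_mem _ t (subset_span (by simp)))
  set C := K ∩ L
  have hCc : IsCompact C := hKc.inter_right L.closed_of_finiteDimensional
  have hC : Convex ℝ C := hK.inter L.convex
  have hpL : p ∈ L := AffineSubspace.self_mem_mk' p _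
  have hpC : p ∈ erosion C z := ⟨⟨hp.1, hpL⟩, hp.2, by simpa using hLz p hpL 1⟩
  have hzC := hz.inter hLz
  have hz'C := hz'.inter hLz'
  obtain ⟨r₁, hr₁, hmax⟩ := hCc.exists_isMaxOn ⟨p, hpC.1⟩ f.continuous.continuousOn
  obtain ⟨r₀, hr₀, hmin⟩ := hCc.exists_isMinOn ⟨p, hpC.1⟩ f.continuous.continuousOn
  obtain ⟨A₁, hA₁, hfA₁⟩ := hzC.exists_mem_erosion_erosion_of_isMaxOn hz'C hfz hfz' hr₁ hmax
  obtain ⟨A₀, hA₀, hfA₀⟩ := hzC.exists_mem_erosion_erosion_of_isMinOn hz'C hfz hfz' hr₀ hmin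
  have hfp : f p ∈ Icc (f A₀) (f A₁) := by
    have : f (p + z) ≤ f r₁ := hmax hpC.2
    rw [map_add, hfz] at this
    exact ⟨hfA₀ ▸ hmin hpC.1, by linarith⟩
  obtain ⟨A, hA, hfA⟩ := ((hC.erosion z).erosion z').isPreconnected.intermediate_value hA₀ hA₁
    f.continuous.continuousOn hfp
  obtain ⟨a, b, hab⟩ := mem_span_pair.1 (AffineSubspace.mem_mk'.1 hA.1.1.2)
  have ha : a = 0 := by simpa [hfz, hfz', hfA] using congrArg f hab
  have hA' : p + b • z' ∈ erosion (erosion C z) z' := by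
    rw [ha, zero_smul, zero_add, vsub_eq_sub] at hab
    rwa [hab, add_sub_cancel]
  obtain ⟨y, hy, σ, hσ, rfl⟩ := exists_mem_erosion_of_add_smul_mem (hC.erosion z) hpC hA'
  exact ⟨y, erosion_mono (erosion_mono inter_subset_left) hy, σ, hσ, rfl⟩

/-- Pass to the face of `convexHull s` on which a functional `g` with `g z = 0` and
`g (a - b) = 1` is maximal: it is still covered by translates of `[0, z]`, and it misses `a` or
`b`. -/
theorem exists_ssubset_segmentCovered_convexHull {s : Finset E} (hs : s.Nonempty)
    (h : SegmentCovered (convexHull ℝ (s : Set E)) z) {a b : E} (ha : a ∈ s) (hb : b ∈ s)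
    (hab : a - b ∉ ℝ ∙ z) :
    ∃ T ⊂ s, T.Nonempty ∧ SegmentCovered (convexHull ℝ (T : Set E)) z := by
  classical
  obtain ⟨g, hg, hgz⟩ := exists_eq_one_eq_zero_of_notMem_span hab
  have hsc : IsCompact (convexHull ℝ (s : Set E)) := s.finite_toSet.isCompact_convexHull ℝ
  set F := g.toExposed (convexHull ℝ (s : Set E))
  have hF : IsExposed ℝ (convexHull ℝ (s : Set E)) F := ContinuousLinearMap.toExposed.isExposed
  set T := s.filter (· ∈ F)
  have hFT : F = convexHull ℝ (T : Set E) := by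
    rw [Finset.coe_filter]
    exact (hF.subset_convexHull_inter s.finite_toSet).antisymm
      (convexHull_min (fun x hx => hx.2) (hF.convex (convex_convexHull ℝ _)))
  have hFne : F.Nonempty := by
    obtain ⟨x, hx, hmax⟩ :=
      hsc.exists_isMaxOn (hs.to_set.convexHull (𝕜 := ℝ)) g.continuous.continuousOn
    exact ⟨x, hx, hmax⟩
  have hTs : T ⊂ s := by
    refine Finset.filter_ssubset.2 (by_contra fun hall => ?_)
    push Not at hall
    have : g (a - b) ≤ 0 := by
      rw [map_sub, sub_nonpos]
      exact (hall b hb).2 a (subset_convexHull ℝ _ ha)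
    linarith
  refine ⟨T, hTs, by simpa [hFT, convexHull_nonempty_iff] using hFne, ?_⟩
  exact hFT ▸ h.inter (F := {x | ∀ y ∈ convexHull ℝ (s : Set E), g y ≤ g x}) fun x hx t => by
    simpa [hgz] using hx

theorem exists_sub_mem_span_of_segmentCovered (s : Finset E) (hs : s.Nonempty) (hz : z ≠ 0)
    (h : SegmentCovered (convexHull ℝ (s : Set E)) z) :
    ∃ a ∈ s, ∃ b ∈ s, a ≠ b ∧ a - b ∈ ℝ ∙ z := by
  induction s using Finset.strongInduction with
  | H s ih =>
  by_cases hpar : ∀ a ∈ s, ∀ b ∈ s, a - b ∈ ℝ ∙ z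
  · obtain ⟨x, hx⟩ := hs
    obtain ⟨y, hy, -⟩ := h x (subset_convexHull ℝ _ hx)
    have hnt : (s : Set E).Nontrivial := by
      by_contra hsub
      rw [(not_nontrivial_iff.1 hsub).eq_singleton_of_mem hx, convexHull_singleton] at hy
      obtain ⟨rfl : y = x, hyz : y + z = y⟩ := hy
      exact hz (by simpa using hyz)
    obtain ⟨a, ha, b, hb, hab⟩ := hnt
    exact ⟨a, ha, b, hb, hab, hpar a ha b hb⟩
  push Not at hpar
  obtain ⟨a, ha, b, hb, hab⟩ := hpar
  obtain ⟨T, hTs, hTne, hT⟩ := exists_ssubset_segmentCovered_convexHull hs h ha hb hab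
  obtain ⟨a', ha', b', hb', hab', hmem⟩ := ih T hTs hTne hT
  exact ⟨a', hTs.subset ha', b', hTs.subset hb', hab', hmem⟩

open Projectivization in
theorem exists_finset_directions_of_segmentCovered (s : Finset E) (hs : s.Nonempty) :
    ∃ S : Finset (ℙ ℝ E), ∀ z (hz : z ≠ 0), SegmentCovered (convexHull ℝ (s : Set E)) z →
      mk ℝ z hz ∈ S := by
  let D : Set (E × E) := {q | q.1 ∈ s ∧ q.2 ∈ s ∧ q.1 - q.2 ≠ 0}
  have hD : D.Finite := (s.finite_toSet.prod s.finite_toSet).subset fun q hq => ⟨hq.1, hq.2.1⟩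
  have hfin := hD.dependent_image fun q hq => mk ℝ (q.1 - q.2) hq.2.2
  refine ⟨hfin.toFinset, fun z hz h => ?_⟩
  obtain ⟨a, ha, b, hb, hab, hmem⟩ := exists_sub_mem_span_of_segmentCovered s hs hz h
  have hab' : a - b ≠ 0 := sub_ne_zero.2 hab
  exact hfin.mem_toFinset.2 ⟨(a, b), ⟨ha, hb, hab'⟩,
    (mk_eq_mk_iff' ℝ _ _ hab' hz).2 (mem_span_singleton.1 hmem)⟩

end Directions

theorem isClosed_setOf_exists_mem_of_isCompact {X Y : Type*} [TopologicalSpace X]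
    [TopologicalSpace Y] {C : Set Y} (hC : IsCompact C) {s : Set (X × Y)} (hs : IsClosed s) :
    IsClosed {x | ∃ y ∈ C, (x, y) ∈ s} := by
  have := isCompact_iff_compactSpace.1 hC
  have hs' : IsClosed {q : X × C | (q.1, (q.2 : Y)) ∈ s} := hs.preimage (by fun_prop)
  convert isClosedMap_fst_of_compactSpace _ hs' using 1
  ext x
  simp

section MaxWidth

variable {E : Type*} [NormedAddCommGroup E] [NormedSpace ℝ E] {K : Set E}

theorem isClosed_setOf_segmentCovered (hK : IsCompact K) (d : E) :
    IsClosed {t : ℝ | SegmentCovered K (t • d)} := by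
  have : {t : ℝ | SegmentCovered K (t • d)} = ⋂ x ∈ K, {t | ∃ q ∈ K ×ˢ Icc (0 : ℝ) 1,
      (t, q) ∈ {r : ℝ × E × ℝ | r.2.1 + r.1 • d ∈ K ∧ x = r.2.1 + r.2.2 • r.1 • d}} := by
    ext t
    simp only [SegmentCovered, erosion, mem_iInter, Prod.exists, mem_prod]
    refine forall₂_congr fun x _ => ⟨?_, ?_⟩
    · rintro ⟨y, ⟨hy, hyt⟩, σ, hσ, rfl⟩
      exact ⟨y, σ, ⟨hy, hσ⟩, hyt, rfl⟩
    · rintro ⟨y, σ, ⟨hy, hσ⟩, hyt, rfl⟩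
      exact ⟨y, ⟨hy, hyt⟩, σ, hσ, rfl⟩
  rw [this]
  exact isClosed_biInter fun x _ => isClosed_setOf_exists_mem_of_isCompact (hK.prod isCompact_Icc)
    ((hK.isClosed.preimage (by fun_prop)).inter (isClosed_eq (by fun_prop) (by fun_prop)))

def maxWidth (K : Set E) (d : E) : ℝ := sSup {t | 0 ≤ t ∧ SegmentCovered K (t • d)}

theorem isGreatest_maxWidth (hK : IsCompact K) (hne : K.Nonempty) {d : E} (hd : d ≠ 0) :
    IsGreatest {t | 0 ≤ t ∧ SegmentCovered K (t • d)} (maxWidth K d) := by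
  set T : Set ℝ := {t | 0 ≤ t ∧ SegmentCovered K (t • d)}
  have hT : IsCompact T := by
    refine (isCompact_Icc (a := 0) (b := Metric.diam K / ‖d‖)).of_isClosed_subset
      (isClosed_Ici.inter (isClosed_setOf_segmentCovered hK d)) fun t ht => ⟨ht.1, ?_⟩
    rw [le_div_iff₀ (norm_pos_iff.2 hd)]
    simpa [norm_smul, abs_of_nonneg ht.1] using ht.2.norm_le_diam hK.isBounded hne
  obtain ⟨w, hw⟩ := hT.exists_isGreatest ⟨0, le_rfl, by simpa using segmentCovered_zero K⟩
  rwa [maxWidth, hw.csSup_eq]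

end MaxWidth

theorem Set.sum_singleton_add {α ι : Type*} [AddCommMonoid α] (s : Finset ι) (c : ι → α)
    (X : ι → Set α) : ∑ i ∈ s, ({c i} + X i) = {∑ i ∈ s, c i} + ∑ i ∈ s, X i := by
  rw [Finset.sum_add_distrib]
  exact congrArg (· + _) (map_sum (singletonAddMonoidHom : α →+ Set α) c s).symm

section CenteredSegments

variable {E : Type*} [NormedAddCommGroup E] [NormedSpace ℝ E]

theorem neg_segment_neg (u : E) : -segment ℝ (-u) u = segment ℝ (-u) u := by
  have := image_segment ℝ (-LinearMap.id : E →ₗ[ℝ] E).toAffineMap (-u) u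
  simp only [LinearMap.coe_toAffineMap, LinearMap.neg_apply, LinearMap.id_apply, neg_neg] at this
  rw [← image_neg_eq_neg, this, segment_symm]

theorem smul_segment_neg (t : ℝ) (u : E) : t • segment ℝ (-u) u = segment ℝ (-(t • u)) (t • u) := by
  have := image_segment ℝ (t • LinearMap.id : E →ₗ[ℝ] E).toAffineMap (-u) u
  simp only [LinearMap.coe_toAffineMap, LinearMap.smul_apply, LinearMap.id_apply, smul_neg] at this
  rw [← image_smul, ← this]

theorem segment_zero_smul (t : ℝ) (u : E) :
    segment ℝ 0 (t • u) = {(t / 2) • u} + (|t| / 2) • segment ℝ (-u) u := by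
  rw [smul_segment_neg, singleton_add, segment_translate_image]
  rcases le_total 0 t with ht | ht
  · rw [abs_of_nonneg ht]
    congr 1 <;> module
  · rw [abs_of_nonpos ht, segment_symm]
    congr 1 <;> module

theorem exists_sum_segment_eq_of_mem_span {ι : Type*} (I : Finset ι) (v : ι → E) (u : E)
    (hv : ∀ i ∈ I, v i ∈ ℝ ∙ u) :
    ∃ c : E, ∃ τ ≥ (0 : ℝ), ∑ i ∈ I, segment ℝ 0 (v i) = {c} + τ • segment ℝ (-u) u := by
  classical
  induction I using Finset.induction_on with
  | empty =>
    exact ⟨0, 0, le_rfl, by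
      rw [Finset.sum_empty, zero_smul_set ⟨_, left_mem_segment ℝ (-u) u⟩, singleton_zero, add_zero]⟩
  | insert i I hi ih =>
    obtain ⟨c, τ, hτ, h⟩ := ih fun j hj => hv j (Finset.mem_insert_of_mem hj)
    obtain ⟨ρ, hρ⟩ := mem_span_singleton.1 (hv i (Finset.mem_insert_self i I))
    refine ⟨(ρ / 2) • u + c, |ρ| / 2 + τ, by positivity, ?_⟩
    rw [Finset.sum_insert hi, h, ← hρ, segment_zero_smul,
      (convex_segment _ _).add_smul (by positivity) hτ, ← singleton_add_singleton,
      add_add_add_comm]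

open Projectivization in
theorem sum_segment_indicator_span {S : Finset (ℙ ℝ E)} {v : E}
    (hS : ∀ hv : v ≠ 0, mk ℝ v hv ∈ S) :
    ∑ p ∈ S, segment ℝ 0 ((ℝ ∙ p.rep : Set E).indicator id v) = segment ℝ 0 v := by
  by_cases hv : v = 0
  · subst hv
    simp [segment_same]
  rw [Finset.sum_eq_single (mk ℝ v hv)]
  · rw [indicator_of_mem ((mem_span_rep_iff hv _).2 rfl), id]
  · intro q _ hq
    rw [indicator_of_notMem fun h => hq ((mem_span_rep_iff hv q).1 h).symm, segment_same,
      singleton_zero]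
  · exact fun h => absurd (hS hv) h

def centeredZonotope (S : Finset (ℙ ℝ E)) (τ : ℙ ℝ E → ℝ) : Set E :=
  ∑ p ∈ S, τ p • segment ℝ (-p.rep) p.rep

theorem neg_centeredZonotope (S : Finset (ℙ ℝ E)) (τ : ℙ ℝ E → ℝ) :
    -centeredZonotope S τ = centeredZonotope S τ := by
  simp only [centeredZonotope, ← Finset.sum_neg_distrib, ← smul_set_neg, neg_segment_neg]

theorem centeredZonotope_add {S : Finset (ℙ ℝ E)} {τ τ' : ℙ ℝ E → ℝ} (hτ : ∀ p ∈ S, 0 ≤ τ p)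
    (hτ' : ∀ p ∈ S, 0 ≤ τ' p) :
    centeredZonotope S τ + centeredZonotope S τ' = centeredZonotope S (τ + τ') := by
  rw [centeredZonotope, centeredZonotope, centeredZonotope, ← Finset.sum_add_distrib]
  exact Finset.sum_congr rfl fun p hp => ((convex_segment _ _).add_smul (hτ p hp) (hτ' p hp)).symm

open Projectivization in
theorem exists_sum_segment_eq_singleton_add_centeredZonotope {ι : Type*} (I : Finset ι)
    (a b : ι → E) {S : Finset (ℙ ℝ E)} (hS : ∀ i ∈ I, ∀ h : b i - a i ≠ 0, mk ℝ _ h ∈ S) :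
    ∃ c : E, ∃ τ : ℙ ℝ E → ℝ, (∀ p, 0 ≤ τ p) ∧
      ∑ i ∈ I, segment ℝ (a i) (b i) = {c} + centeredZonotope S τ := by
  have hsplit : ∑ i ∈ I, segment ℝ (a i) (b i) = {∑ i ∈ I, a i} +
      ∑ p ∈ S, ∑ i ∈ I, segment ℝ 0 ((ℝ ∙ p.rep : Set E).indicator id (b i - a i)) := by
    rw [Finset.sum_comm, ← sum_singleton_add]
    refine Finset.sum_congr rfl fun i hi => ?_
    rw [sum_segment_indicator_span (hS i hi), singleton_add, segment_translate_image, add_zero,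
      add_sub_cancel]
  choose c τ hτ hcτ using fun p : ℙ ℝ E => exists_sum_segment_eq_of_mem_span I
    (fun i => (ℝ ∙ p.rep : Set E).indicator id (b i - a i)) p.rep fun i _ => by
      by_cases h : b i - a i ∈ ℝ ∙ p.rep
      · simpa [indicator_of_mem h] using h
      · simp [indicator_of_notMem h]
  refine ⟨∑ i ∈ I, a i + ∑ p ∈ S, c p, τ, hτ, ?_⟩
  rw [hsplit, Finset.sum_congr rfl fun p _ => hcτ p, sum_singleton_add, ← add_assoc,
    singleton_add_singleton]
  rfl

end CenteredSegments

section Summands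

variable {n : ℕ}

local notation "V" => EuclideanSpace ℝ (Fin n)

theorem isSummand_iff {L K : Set V} : IsSummand L K ↔ ∃ M, IsConvexBody M ∧ K = L + M := by
  simp only [IsSummand, IsConvexBody, and_assoc]

theorem IsSummand.trans {L K P : Set V} (hLK : IsSummand L K) (hKP : IsSummand K P) :
    IsSummand L P := by
  obtain ⟨M, hM, rfl⟩ := isSummand_iff.1 hLK
  obtain ⟨M', hM', rfl⟩ := isSummand_iff.1 hKP
  exact isSummand_iff.2 ⟨M + M', hM.add hM', add_assoc _ _ _⟩

theorem IsSummand.of_add {L M K : Set V} (h : IsSummand (L + M) K) (hM : IsConvexBody M) :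
    IsSummand L K := by
  obtain ⟨M', hM', rfl⟩ := isSummand_iff.1 h
  exact isSummand_iff.2 ⟨M + M', hM.add hM', add_assoc _ _ _⟩

theorem isSummand_sum_of_mem {ι : Type*} {s : Finset ι} {f : ι → Set V}
    (hf : ∀ i ∈ s, IsConvexBody (f i)) {i : ι} (hi : i ∈ s) : IsSummand (f i) (∑ j ∈ s, f j) := by
  classical
  exact isSummand_iff.2 ⟨_, IsConvexBody.sum _ fun j hj => hf j (Finset.mem_of_mem_erase hj),
    (Finset.add_sum_erase s f hi).symm⟩

theorem IsSummand.segmentCovered {a b : V} {K : Set V} (h : IsSummand (segment ℝ a b) K) :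
    SegmentCovered K (b - a) := by
  obtain ⟨M, -, rfl⟩ := isSummand_iff.1 h
  rintro _ ⟨x, hx, m, hm, rfl⟩
  rw [segment_eq_image'] at hx
  obtain ⟨σ, hσ, rfl⟩ := hx
  refine ⟨a + m, ⟨add_mem_add (left_mem_segment ℝ a b) hm, ?_⟩, σ, hσ, add_right_comm _ _ _⟩
  convert add_mem_add (right_mem_segment ℝ a b) hm using 1
  abel

open Projectivization in
theorem isSummand_sum_segment_of_segmentCovered {K : Set V} (hK : IsConvexBody K)
    (S : Finset (ℙ ℝ V)) (w : ℙ ℝ V → ℝ) (h : ∀ p ∈ S, SegmentCovered K (w p • p.rep)) :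
    IsSummand (∑ p ∈ S, segment ℝ 0 (w p • p.rep)) K := by
  classical
  induction S using Finset.induction_on generalizing K with
  | empty => exact isSummand_iff.2 ⟨K, hK, by simp⟩
  | insert p S hp ih =>
    have hpK := h p (Finset.mem_insert_self p S)
    have hK' : IsConvexBody (erosion K (w p • p.rep)) :=
      ⟨hK.1.erosion _, hK.2.1.erosion _, hpK.erosion_nonempty hK.2.2⟩
    have hcov : ∀ q ∈ S, SegmentCovered (erosion K (w p • p.rep)) (w q • q.rep) := by
      intro q hq
      have hqK := h q (Finset.mem_insert_of_mem hq)
      rcases eq_or_ne (w p) 0 with h0 | h0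
      · simpa [h0, erosion_zero] using hqK
      · exact hpK.erosion_of_notMem_span hK.1 hK.2.1
          (smul_rep_notMem_span (by rintro rfl; exact hp hq) h0 _) hqK
    obtain ⟨M, hM, hKM⟩ := isSummand_iff.1 (ih hK' hcov)
    rw [Finset.sum_insert hp]
    exact isSummand_iff.2 ⟨M, hM, by rw [add_assoc, ← hKM]; exact hpK.eq_segment_add_erosion hK.1⟩

theorem isZonotope_sum {ι : Type*} (s : Finset ι) (a b : ι → V) :
    IsZonotope (∑ i ∈ s, segment ℝ (a i) (b i)) :=
  ⟨s.card, fun j => a (s.equivFin.symm j), fun j => b (s.equivFin.symm j), by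
    rw [← Finset.sum_coe_sort s, ← s.equivFin.symm.sum_comp]⟩

theorem IsZonotope.isConvexBody {Z : Set V} (h : IsZonotope Z) : IsConvexBody Z := by
  obtain ⟨N, a, b, rfl⟩ := h
  exact IsConvexBody.sum _ fun i _ => isConvexBody_segment (a i) (b i)

theorem isZonotope_centeredZonotope (S : Finset (ℙ ℝ V)) (τ : ℙ ℝ V → ℝ) :
    IsZonotope (centeredZonotope S τ) := by
  simpa only [centeredZonotope, smul_segment_neg] using isZonotope_sum S _ _

end Summands

section MaxZonotope

variable {n : ℕ}

local notation "V" => EuclideanSpace ℝ (Fin n)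

def IsMaxCenteredZonotopeSummand (Z K : Set V) : Prop :=
  IsZonotope Z ∧ Z = -Z ∧ IsSummand Z K ∧
    ∀ Y : Set V, IsZonotope Y → IsSummand Y K → ∃ x : V, IsSummand ((fun y => y + x) '' Y) Z

theorem IsMaxCenteredZonotopeSummand.unique {Z Z' K : Set V}
    (hZ : IsMaxCenteredZonotopeSummand Z K) (hZ' : IsMaxCenteredZonotopeSummand Z' K) :
    Z' = Z := by
  obtain ⟨x, hx⟩ := hZ.2.2.2 Z' hZ'.1 hZ'.2.2.1
  obtain ⟨y, hy⟩ := hZ'.2.2.2 Z hZ.1 hZ.2.2.1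
  rw [← add_singleton] at hx hy
  obtain ⟨M, hM, hZM⟩ := isSummand_iff.1 hx
  obtain ⟨M', hM', hZ'M'⟩ := isSummand_iff.1 hy
  obtain ⟨-, hZc, hZne⟩ := hZ.1.isConvexBody
  have h0 : ({y} + M') + ({x} + M) = 0 := by
    refine hZc.eq_zero_of_add_eq_self hZne
      (((singleton_nonempty y).add hM'.2.2).add ((singleton_nonempty x).add hM.2.2)) ?_
    calc Z + (({y} + M') + ({x} + M)) = Z + {y} + M' + {x} + M := by abel
      _ = Z := by rw [← hZ'M', ← hZM]
  obtain ⟨-, e, -, he, -⟩ := Set.add_eq_zero_iff.1 h0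
  have hZe : Z = Z' + {e} := by rw [hZM, add_assoc, he]
  -- both `Z` and `Z'` are centered, so the translation `e` is trivial
  have hZ'e : Z' = Z + {-e} := by
    rw [hZe, add_assoc, singleton_add_singleton, add_neg_cancel, singleton_zero, add_zero]
  have hZe' : Z = Z' + {-e} := by
    rw [hZ.2.1, hZe, neg_add, neg_singleton, ← hZ'.2.1]
  have h2e : Z + {-e + -e} = Z := by
    rw [← singleton_add_singleton, ← add_assoc, ← hZ'e, ← hZe']
  have he0 : e = 0 := by
    have := hZc.eq_zero_of_add_eq_self hZne (singleton_nonempty _) h2e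
    rw [← singleton_zero, singleton_eq_singleton_iff, ← neg_add, neg_eq_zero, ← two_smul ℝ,
      smul_eq_zero] at this
    exact this.resolve_left two_ne_zero
  rw [hZ'e, he0, neg_zero, singleton_zero, add_zero]

theorem IsSummand.two_mul_le_maxWidth {K : Set V} (hK : IsCompact K) (hne : K.Nonempty) {u : V}
    (hu : u ≠ 0) {τ : ℝ} (hτ : 0 ≤ τ) (h : IsSummand (τ • segment ℝ (-u) u) K) :
    2 * τ ≤ maxWidth K u := by
  rw [smul_segment_neg] at h
  have hcov := h.segmentCovered
  rw [sub_neg_eq_add, ← two_smul ℝ, smul_smul] at hcov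
  exact (isGreatest_maxWidth hK hne hu).2 ⟨by positivity, hcov⟩

theorem isSummand_centeredZonotope_maxWidth {K : Set V} (hK : IsConvexBody K)
    (S : Finset (ℙ ℝ V)) : IsSummand (centeredZonotope S fun p => maxWidth K p.rep / 2) K := by
  have hw (p : ℙ ℝ V) := isGreatest_maxWidth hK.2.1 hK.2.2 p.rep_nonzero
  have := isSummand_sum_segment_of_segmentCovered hK S _ fun p _ => (hw p).1.2
  simp_rw [segment_zero_smul, abs_of_nonneg (hw _).1.1] at this
  rw [sum_singleton_add, add_comm] at this
  exact this.of_add (isConvexBody_singleton _)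

open Projectivization in
theorem exists_isSummand_image_add_centeredZonotope_maxWidth {K Y : Set V} (hK : IsConvexBody K)
    {S : Finset (ℙ ℝ V)} (hS : ∀ z (hz : z ≠ 0), SegmentCovered K z → mk ℝ z hz ∈ S)
    (hY : IsZonotope Y) (hYK : IsSummand Y K) :
    ∃ x : V,
      IsSummand ((fun y => y + x) '' Y) (centeredZonotope S fun p => maxWidth K p.rep / 2) := by
  obtain ⟨N, a, b, rfl⟩ := hY
  have hcov (i : Fin N) : SegmentCovered K (b i - a i) :=
    ((isSummand_sum_of_mem (fun j _ => isConvexBody_segment (a j) (b j))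
      (Finset.mem_univ i)).trans hYK).segmentCovered
  obtain ⟨c, τ, hτ, hY⟩ := exists_sum_segment_eq_singleton_add_centeredZonotope Finset.univ a b
    fun i _ h => hS _ h (hcov i)
  have hτw (p : ℙ ℝ V) (hp : p ∈ S) : τ p ≤ maxWidth K p.rep / 2 := by
    have hsum : IsSummand (τ p • segment ℝ (-p.rep) p.rep) K := by
      refine ((isSummand_sum_of_mem (f := fun q => τ q • segment ℝ (-q.rep) q.rep)
        (fun q _ => (isConvexBody_segment _ _).smul (τ q)) hp).trans ?_).trans hYK
      rw [hY, add_comm]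
      exact isSummand_iff.2 ⟨{c}, isConvexBody_singleton c, rfl⟩
    linarith [hsum.two_mul_le_maxWidth hK.2.1 hK.2.2 p.rep_nonzero (hτ p)]
  refine ⟨-c, isSummand_iff.2 ⟨centeredZonotope S fun p => maxWidth K p.rep / 2 - τ p,
    (isZonotope_centeredZonotope _ _).isConvexBody, ?_⟩⟩
  have hcancel (A : Set V) : {c} + A + {-c} = A := by
    rw [add_right_comm, singleton_add_singleton, add_neg_cancel, singleton_zero, zero_add]
  rw [← add_singleton, hY, hcancel,
    centeredZonotope_add (fun p _ => hτ p) fun p hp => by linarith [hτw p hp]]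
  congr 1
  ext p
  simp

open Projectivization in
theorem isMaxCenteredZonotopeSummand_centeredZonotope {K : Set V} (hK : IsConvexBody K)
    {S : Finset (ℙ ℝ V)} (hS : ∀ z (hz : z ≠ 0), SegmentCovered K z → mk ℝ z hz ∈ S) :
    IsMaxCenteredZonotopeSummand (centeredZonotope S fun p => maxWidth K p.rep / 2) K :=
  ⟨isZonotope_centeredZonotope _ _, (neg_centeredZonotope _ _).symm,
    isSummand_centeredZonotope_maxWidth hK S,
    fun _ hY hYK => exists_isSummand_image_add_centeredZonotope_maxWidth hK hS hY hYK⟩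

end MaxZonotope

theorem exists_unique_maximal_zonotope_summand {n : ℕ}
    (P : ConvexBody (EuclideanSpace ℝ (Fin n)))
    (hP : ∃ s : Finset (EuclideanSpace ℝ (Fin n)),
      (P : Set (EuclideanSpace ℝ (Fin n))) = convexHull ℝ ↑s) :
    ∃! Z : Set (EuclideanSpace ℝ (Fin n)),
      IsZonotope Z ∧ Z = -Z ∧ IsSummand Z (P : Set (EuclideanSpace ℝ (Fin n))) ∧
      ∀ Y : Set (EuclideanSpace ℝ (Fin n)), IsZonotope Y →
        IsSummand Y (P : Set (EuclideanSpace ℝ (Fin n))) →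
        ∃ x : EuclideanSpace ℝ (Fin n), IsSummand ((fun y => y + x) '' Y) Z := by
  obtain ⟨s, hs⟩ := hP
  have hsne : s.Nonempty := by
    rw [← Finset.coe_nonempty, ← convexHull_nonempty_iff (𝕜 := ℝ), ← hs]
    exact P.nonempty
  obtain ⟨S, hS⟩ := exists_finset_directions_of_segmentCovered s hsne
  have hZ := isMaxCenteredZonotopeSummand_centeredZonotope
    ⟨P.convex, P.isCompact, P.nonempty⟩ (hs ▸ hS)
  exact ⟨_, hZ, fun Z hZ' => hZ.unique hZ'⟩
end
end
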